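/- arXiv:2009.01044 — 12 statements merged into one kernel-verified Lean document; each statement's English description precedes it below -/
import Mathlib

section
/- A finite group G satisfies LCM(G) = G if and only if G is nilpotent and every Sylow subgroup of G belongs to the class CP2. -/
/-- `lcmFull G = LCM(G)`: the set of all `x ∈ G` such that `o(xⁿ z)` divides
`lcm(o(xⁿ), o(z))` for all `z ∈ G` and all integers `n`. -/
def lcmFull (G : Type*) [Group G] : Set G :=
  {x : G | ∀ z : G, ∀ n : ℤ, orderOf (x ^ n * z) ∣ Nat.lcm (orderOf (x ^ n)) (orderOf z)}

/-- The class `CP2`: `o(xy) ≤ max (o x) (o y)` for all `x, y`. -/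
def IsCP2 (P : Type*) [Group P] : Prop :=
  ∀ x y : P, orderOf (x * y) ≤ max (orderOf x) (orderOf y)

lemma lcmFull_eq_univ_iff_key {G : Type*} [Group G] :
    lcmFull G = Set.univ ↔
      ∀ a b : G, orderOf (a * b) ∣ Nat.lcm (orderOf a) (orderOf b) := by
  constructor
  · intro h a b
    have := (Set.eq_univ_iff_forall.mp h a) b 1
    simpa using this
  · intro h
    apply Set.eq_univ_iff_forall.mpr
    intro x z n
    exact h _ _

/-- The subgroup of all `p`-elements, under the LCM hypothesis. -/
def pElems (G : Type*) [Group G] (p : ℕ) (hp : p.Prime)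
    (h : ∀ a b : G, orderOf (a * b) ∣ Nat.lcm (orderOf a) (orderOf b)) : Subgroup G where
  carrier := {g : G | ∃ k : ℕ, orderOf g = p ^ k}
  one_mem' := ⟨0, by simp⟩
  mul_mem' := by
    rintro a b ⟨i, hi⟩ ⟨j, hj⟩
    have h1 : orderOf (a * b) ∣ p ^ (i + j) := by
      refine (h a b).trans (Nat.lcm_dvd ?_ ?_)
      · rw [hi]; exact pow_dvd_pow p (Nat.le_add_right i j)
      · rw [hj]; exact pow_dvd_pow p (Nat.le_add_left j i)
    obtain ⟨k, _, hk⟩ := (Nat.dvd_prime_pow hp).mp h1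
    exact ⟨k, hk⟩
  inv_mem' := by
    rintro a ⟨i, hi⟩
    exact ⟨i, by rwa [orderOf_inv]⟩

lemma pElems_normal (G : Type*) [Group G] (p : ℕ) (hp : p.Prime)
    (h : ∀ a b : G, orderOf (a * b) ∣ Nat.lcm (orderOf a) (orderOf b)) :
    (pElems G p hp h).Normal := by
  constructor
  rintro a ⟨i, hi⟩ g
  refine ⟨i, ?_⟩
  have h1 : g * a * g⁻¹ = (MulAut.conj g) a := rfl
  rw [h1, ← hi]
  exact orderOf_injective (MulAut.conj g).toMonoidHom (MulAut.conj g).injective a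

lemma pElems_isPGroup (G : Type*) [Group G] (p : ℕ) (hp : p.Prime)
    (h : ∀ a b : G, orderOf (a * b) ∣ Nat.lcm (orderOf a) (orderOf b)) :
    IsPGroup p (pElems G p hp h) := by
  rintro ⟨g, k, hk⟩
  refine ⟨k, ?_⟩
  ext
  simp only [SubmonoidClass.coe_pow, OneMemClass.coe_one]
  rw [← hk]
  exact pow_orderOf_eq_one g

lemma sylow_normal_of_key {G : Type*} [Group G] (p : ℕ) (hp : p.Prime)
    (h : ∀ a b : G, orderOf (a * b) ∣ Nat.lcm (orderOf a) (orderOf b))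
    (P : Sylow p G) : (P : Subgroup G).Normal := by
  haveI := Fact.mk hp
  have hle : (P : Subgroup G) ≤ pElems G p hp h := by
    intro x hx
    obtain ⟨k, hk⟩ := IsPGroup.iff_orderOf.mp P.isPGroup' ⟨x, hx⟩
    exact ⟨k, by rwa [Subgroup.orderOf_mk] at hk⟩
  have := P.is_maximal' (pElems_isPGroup G p hp h) hle
  rw [← this]
  exact pElems_normal G p hp h

/-- A finite group `G` satisfies `LCM(G) = G` if and only if `G` is nilpotent and
every Sylow subgroup of `G` belongs to `CP2`. -/
theorem lcmFull_eq_univ_iff (G : Type*) [Group G] [Finite G] :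
    lcmFull G = Set.univ ↔
      (Group.IsNilpotent G ∧
        ∀ (p : ℕ), p.Prime → ∀ P : Sylow p G, IsCP2 ↥(P : Subgroup G)) := by
  rw [lcmFull_eq_univ_iff_key]
  constructor
  · intro h
    constructor
    · -- nilpotent: all Sylows normal
      have := (isNilpotent_of_finite_tfae (G := G)).out 0 3
      rw [this]
      intro p hp P
      exact sylow_normal_of_key p hp.out h P
    · intro p hp P x y
      haveI := Fact.mk hp
      obtain ⟨i, hi⟩ := IsPGroup.iff_orderOf.mp P.isPGroup' x
      obtain ⟨j, hj⟩ := IsPGroup.iff_orderOf.mp P.isPGroup' y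
      have h1 : orderOf ((x : G) * (y : G)) ∣ Nat.lcm (orderOf (x : G)) (orderOf (y : G)) := h _ _
      rw [Subgroup.orderOf_coe, Subgroup.orderOf_coe, ← Subgroup.coe_mul,
        Subgroup.orderOf_coe] at h1
      have h2 : Nat.lcm (orderOf x) (orderOf y) ∣ max (orderOf x) (orderOf y) := by
        rw [hi, hj]
        rcases Nat.le_total i j with hij | hij
        · rw [max_eq_right (Nat.pow_le_pow_right hp.pos hij)]
          exact Nat.lcm_dvd (pow_dvd_pow p hij) dvd_rfl
        · rw [max_eq_left (Nat.pow_le_pow_right hp.pos hij)]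
          exact Nat.lcm_dvd dvd_rfl (pow_dvd_pow p hij)
      have h3 := h1.trans h2
      refine Nat.le_of_dvd ?_ h3
      exact lt_of_lt_of_le (orderOf_pos x) (le_max_left _ _)
  · rintro ⟨hnil, hcp2⟩ a b
    -- decompose G as product of Sylow subgroups
    have h5 := ((isNilpotent_of_finite_tfae (G := G)).out 0 4).mp hnil
    obtain ⟨e⟩ := h5
    set N := Nat.lcm (orderOf a) (orderOf b) with hN
    -- transfer to the product
    have horder : ∀ g : G, orderOf (e.symm g) = orderOf g := fun g =>
      orderOf_injective e.symm.toMonoidHom e.symm.injective g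
    rw [← horder (a * b), map_mul]
    set f := e.symm a
    set g := e.symm b
    rw [orderOf_dvd_iff_pow_eq_one]
    funext p P
    have hpp : (p : ℕ).Prime := Nat.prime_of_mem_primeFactors p.2
    haveI := Fact.mk hpp
    show (f p P * g p P) ^ N = 1
    rw [← orderOf_dvd_iff_pow_eq_one]
    -- component orders divide the global orders
    have hfa : orderOf (f p P) ∣ orderOf a := by
      rw [← horder a]
      apply orderOf_dvd_of_pow_eq_one
      have h0 := pow_orderOf_eq_one f
      exact congrFun (congrFun h0 p) P
    have hgb : orderOf (g p P) ∣ orderOf b := by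
      rw [← horder b]
      apply orderOf_dvd_of_pow_eq_one
      have h0 := pow_orderOf_eq_one g
      exact congrFun (congrFun h0 p) P
    -- all three orders are powers of p
    obtain ⟨i, hi⟩ := IsPGroup.iff_orderOf.mp P.isPGroup' (f p P)
    obtain ⟨j, hj⟩ := IsPGroup.iff_orderOf.mp P.isPGroup' (g p P)
    obtain ⟨c, hc⟩ := IsPGroup.iff_orderOf.mp P.isPGroup' (f p P * g p P)
    have hle : orderOf (f p P * g p P) ≤ max (orderOf (f p P)) (orderOf (g p P)) :=
      hcp2 (p : ℕ) hpp P (f p P) (g p P)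
    have hmax : max (orderOf (f p P)) (orderOf (g p P)) ≤ (p : ℕ) ^ max i j := by
      rw [hi, hj]
      exact max_le (Nat.pow_le_pow_right hpp.pos (le_max_left i j))
        (Nat.pow_le_pow_right hpp.pos (le_max_right i j))
    have hcle : c ≤ max i j := by
      have : (p : ℕ) ^ c ≤ (p : ℕ) ^ max i j := by
        rw [← hc]; exact hle.trans hmax
      exact (Nat.pow_le_pow_iff_right hpp.one_lt).mp this
    have hdvd : orderOf (f p P * g p P) ∣ (p : ℕ) ^ max i j := by
      rw [hc]; exact pow_dvd_pow _ hcle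
    rcases Nat.le_total i j with hij | hij
    · rw [max_eq_right hij] at hdvd
      rw [← hj] at hdvd
      exact hdvd.trans (hgb.trans (Nat.dvd_lcm_right _ _))
    · rw [max_eq_left hij] at hdvd
      rw [← hi] at hdvd
      exact hdvd.trans (hfa.trans (Nat.dvd_lcm_left _ _))
end

section
/- Let G be a group in which every element has finite order, let p be a positive integer, let H_p(G) = {x ∈ G : gcd(o(x), p) = 1}, and let A be a subset of G with H_p(G) ⊆ A. If x ∈ LCM(H_p(G), A), then every element of the normal closure ⟨x^G⟩ of x in G has order dividing o(x); in particular the exponent of ⟨x^G⟩ equals o(x). -/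
/-- `lcmSet H R`: the set of all `x ∈ H` such that `o(xⁿ y)` divides
`lcm(o(xⁿ), o(y))` for all `y ∈ R` and all integers `n`. -/
def lcmSet {G : Type*} [Group G] (H R : Set G) : Set G :=
  {x ∈ H | ∀ y ∈ R, ∀ n : ℤ, orderOf (x ^ n * y) ∣ Nat.lcm (orderOf (x ^ n)) (orderOf y)}

private lemma orderOf_conj' {G : Type*} [Group G] (g a : G) :
    orderOf (g * a * g⁻¹) = orderOf a := by
  simpa using orderOf_injective (MulAut.conj g).toMonoidHom (MulAut.conj g).injective a

private lemma orderOf_zpow_dvd' {G : Type*} [Group G] (x : G) (n : ℤ) :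
    orderOf (x ^ n) ∣ orderOf x := by
  apply orderOf_dvd_of_pow_eq_one
  rw [← zpow_natCast, ← zpow_mul, mul_comm, zpow_mul, zpow_natCast, pow_orderOf_eq_one, one_zpow]

/-- Let `G` be a periodic group, `p` a positive integer,
`H_p(G) = {x : gcd(o(x), p) = 1}` and `A ⊇ H_p(G)`. If `x ∈ LCM(H_p(G), A)`, then every
element of the normal closure `⟨x^G⟩` has order dividing `o(x)`; in particular the
exponent of `⟨x^G⟩` equals `o(x)`. -/
theorem lcmSet_normalClosure_exponent (G : Type*) [Group G]
    (hper : ∀ g : G, IsOfFinOrder g) (p : ℕ) (hp : 0 < p)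
    (A : Set G) (hA : {x : G | Nat.gcd (orderOf x) p = 1} ⊆ A)
    (x : G) (hx : x ∈ lcmSet {x : G | Nat.gcd (orderOf x) p = 1} A) :
    (∀ w ∈ Subgroup.normalClosure ({x} : Set G), orderOf w ∣ orderOf x) ∧
      Monoid.exponent ↥(Subgroup.normalClosure ({x} : Set G)) = orderOf x := by
  obtain ⟨hxH, hxlcm⟩ := hx
  -- Key step : multiplying a power of `x` by an element of order dividing `o(x)` gives
  -- an element of order dividing `o(x)`.
  have hkey : ∀ (n : ℤ) (y : G), orderOf y ∣ orderOf x → orderOf (x ^ n * y) ∣ orderOf x := by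
    intro n y hy
    have hyA : y ∈ A := hA (Nat.Coprime.coprime_dvd_left hy hxH)
    exact (hxlcm y hyA n).trans (Nat.lcm_dvd (orderOf_zpow_dvd' x n) hy)
  -- Every product of conjugates of `x` or `x⁻¹` (and any conjugate of such a product)
  -- has order dividing `o(x)`.
  have hlist : ∀ l : List G,
      (∀ a ∈ l, ∃ g : G, a = g * x * g⁻¹ ∨ a = g * x⁻¹ * g⁻¹) →
      ∀ g : G, orderOf (g * l.prod * g⁻¹) ∣ orderOf x := by
    intro l
    induction l with
    | nil =>
      intro _ g
      simp
    | cons a t ih =>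
      intro hmem g
      obtain ⟨h, hcase⟩ := hmem a List.mem_cons_self
      have ihy : orderOf (h⁻¹ * t.prod * (h⁻¹)⁻¹) ∣ orderOf x :=
        ih (fun b hb => hmem b (List.mem_cons_of_mem a hb)) h⁻¹
      rcases hcase with rfl | rfl
      · have heq : g * ((h * x * h⁻¹) * t.prod) * g⁻¹
            = (g * h) * (x ^ (1 : ℤ) * (h⁻¹ * t.prod * (h⁻¹)⁻¹)) * (g * h)⁻¹ := by
          group
        rw [List.prod_cons, heq, orderOf_conj']
        exact hkey 1 _ ihy
      · have heq : g * ((h * x⁻¹ * h⁻¹) * t.prod) * g⁻¹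
            = (g * h) * (x ^ (-1 : ℤ) * (h⁻¹ * t.prod * (h⁻¹)⁻¹)) * (g * h)⁻¹ := by
          group
        rw [List.prod_cons, heq, orderOf_conj']
        exact hkey (-1) _ ihy
  have hmain : ∀ w ∈ Subgroup.normalClosure ({x} : Set G), orderOf w ∣ orderOf x := by
    intro w hw
    have hw' : w ∈ (Subgroup.closure (Group.conjugatesOfSet ({x} : Set G))).toSubmonoid := hw
    rw [Subgroup.closure_toSubmonoid] at hw'
    obtain ⟨l, hl, rfl⟩ := Submonoid.exists_list_of_mem_closure hw'
    have hconj : ∀ a ∈ l, ∃ g : G, a = g * x * g⁻¹ ∨ a = g * x⁻¹ * g⁻¹ := by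
      intro a ha
      rcases hl a ha with hc | hc
      · obtain ⟨b, hb, hcj⟩ := Group.mem_conjugatesOfSet_iff.1 hc
        rw [Set.mem_singleton_iff] at hb
        subst hb
        obtain ⟨g, hg⟩ := isConj_iff.1 hcj
        exact ⟨g, Or.inl hg.symm⟩
      · obtain ⟨b, hb, hcj⟩ := Group.mem_conjugatesOfSet_iff.1 (Set.mem_inv.mp hc)
        rw [Set.mem_singleton_iff] at hb
        subst hb
        obtain ⟨g, hg⟩ := isConj_iff.1 hcj
        refine ⟨g, Or.inr ?_⟩
        rw [← inv_inv a, ← hg]; group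
    simpa using hlist l hconj 1
  refine ⟨hmain, ?_⟩
  have hxmem : x ∈ Subgroup.normalClosure ({x} : Set G) :=
    Subgroup.subset_normalClosure (Set.mem_singleton x)
  apply Nat.dvd_antisymm
  · apply Monoid.exponent_dvd_of_forall_pow_eq_one
    intro w
    have : (w : G) ^ orderOf x = 1 :=
      orderOf_dvd_iff_pow_eq_one.1 (hmain w w.2)
    ext
    push_cast
    simpa using this
  · have : orderOf (⟨x, hxmem⟩ : Subgroup.normalClosure ({x} : Set G)) = orderOf x := by
      simpa using (orderOf_injective (Subgroup.normalClosure ({x} : Set G)).subtype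
        Subtype.coe_injective ⟨x, hxmem⟩)
    rw [← this]
    exact Monoid.order_dvd_exponent _
end

section
/- Let G be a finite group and let p be a positive integer. Set H_p(G) = {x ∈ G : gcd(o(x), p) = 1} and R_p(G) = {x ∈ G : gcd(o(x), p) ≠ 1}. Then LCM(H_p(G), G) ∪ LCM(R_p(G), G) ⊆ Fit(G). -/
/-- The Fitting subgroup: the join of all nilpotent normal subgroups; for a finite
group this is the largest nilpotent normal subgroup. -/
def fittingSubgroup (G : Type*) [Group G] : Subgroup G :=
  ⨆ (H : Subgroup G) (_ : H.Normal) (_ : Group.IsNilpotent H), H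

section Aux

variable {G : Type*} [Group G] [Finite G]

/-- The set of elements that map q-elements to q-elements under left multiplication. -/
def qStab (G : Type*) [Group G] [Finite G] (q : ℕ) : Subgroup G where
  carrier := {g : G | ∀ y : G, (∃ k, orderOf y = q ^ k) → ∃ k, orderOf (g * y) = q ^ k}
  one_mem' := by intro y hy; simpa using hy
  mul_mem' := by
    intro a b ha hb y hy
    have := ha (b * y) (hb y hy)
    simpa [mul_assoc] using this
  inv_mem' := by
    intro a ha
    have hpow : ∀ k : ℕ, ∀ y : G, (∃ k, orderOf y = q ^ k) → ∃ j, orderOf (a ^ k * y) = q ^ j := by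
      intro k
      induction k with
      | zero => intro y hy; simpa using hy
      | succ k ih =>
        intro y hy
        have := ha (a ^ k * y) (ih y hy)
        simpa [pow_succ', mul_assoc] using this
    have h1 : a⁻¹ = a ^ (orderOf a - 1) := by
      have hpos : 0 < orderOf a := orderOf_pos a
      have h2 : a * a ^ (orderOf a - 1) = 1 := by
        rw [← pow_succ', Nat.sub_add_cancel hpos]
        exact pow_orderOf_eq_one a
      exact inv_eq_of_mul_eq_one_right h2
    intro y hy
    rw [h1]
    exact hpow _ y hy

lemma orderOf_conj'_s3 (c z : G) : orderOf (c * z * c⁻¹) = orderOf z := by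
  have := orderOf_injective (MulAut.conj c).toMonoidHom (MulAut.conj c).injective z
  simpa using this

lemma qStab_normal (q : ℕ) : (qStab G q).Normal := by
  constructor
  intro g hg c y hy
  have hy' : ∃ k, orderOf (c⁻¹ * y * c) = q ^ k := by
    obtain ⟨k, hk⟩ := hy
    refine ⟨k, ?_⟩
    have := orderOf_conj'_s3 c⁻¹ y
    simpa [hk] using this
  obtain ⟨k, hk⟩ := hg (c⁻¹ * y * c) hy'
  refine ⟨k, ?_⟩
  have h2 : c * (g * (c⁻¹ * y * c)) * c⁻¹ = c * g * c⁻¹ * y := by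
    group
  have := orderOf_conj'_s3 c (g * (c⁻¹ * y * c))
  rw [h2] at this
  rw [this, hk]

lemma mem_qStab_orders {q : ℕ} {g : G} (hg : g ∈ qStab G q) : ∃ k, orderOf g = q ^ k := by
  have := hg 1 ⟨0, by simp⟩
  simpa using this

lemma qStab_isPGroup {q : ℕ} (hq : q.Prime) : IsPGroup q (qStab G q) := by
  intro g
  obtain ⟨k, hk⟩ := mem_qStab_orders g.2
  refine ⟨k, ?_⟩
  have : (g : G) ^ q ^ k = 1 := by
    rw [← hk]; exact pow_orderOf_eq_one _
  ext
  simpa using this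

lemma qStab_le_fitting {q : ℕ} (hq : q.Prime) : qStab G q ≤ fittingSubgroup G := by
  have h1 : (qStab G q).Normal := qStab_normal q
  have h2 : Group.IsNilpotent (qStab G q) :=
    @IsPGroup.isNilpotent _ _ _ _ ⟨hq⟩ (qStab_isPGroup hq)
  exact le_iSup_of_le (qStab G q) (le_iSup_of_le h1 (le_iSup_of_le h2 le_rfl))

lemma mem_fitting_of_cond :
    ∀ N : ℕ, ∀ x : G, orderOf x = N →
      (∀ y : G, ∀ n : ℤ, orderOf (x ^ n * y) ∣ Nat.lcm (orderOf (x ^ n)) (orderOf y)) →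
      x ∈ fittingSubgroup G := by
  intro N
  induction N using Nat.strong_induction_on with
  | _ N ih =>
    intro x hN hx
    have hNpos : 0 < N := hN ▸ orderOf_pos x
    rcases eq_or_lt_of_le (Nat.one_le_iff_ne_zero.mpr hNpos.ne') with h1 | h2
    · -- N = 1, x = 1
      have : orderOf x = 1 := by omega
      rw [orderOf_eq_one_iff] at this
      rw [this]; exact one_mem _
    · -- N ≥ 2
      set q := N.minFac with hqdef
      have hq : q.Prime := Nat.minFac_prime (by omega)
      set a := N.factorization q with hadef
      set m := N / q ^ a with hmdef
      have hsplit : q ^ a * m = N := Nat.ordProj_mul_ordCompl_eq_self N q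
      have hcop : Nat.Coprime q m := Nat.coprime_ordCompl hq hNpos.ne'
      have hqa1 : 1 ≤ a := (Nat.Prime.factorization_pos_of_dvd hq hNpos.ne' (Nat.minFac_dvd N))
      have hqapos : 0 < q ^ a := pow_pos hq.pos a
      have hqa2 : 2 ≤ q ^ a := le_trans hq.two_le (Nat.le_self_pow (by omega) q)
      rcases eq_or_lt_of_le (Nat.one_le_iff_ne_zero.mpr (by
        intro h; rw [h, mul_zero] at hsplit; omega : m ≠ 0)) with hm1 | hm2
      · -- m = 1 : x is a q-element, use qStab
        have hxo : orderOf x = q ^ a := by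
          rw [hN, ← hsplit, ← hm1, mul_one]
        apply qStab_le_fitting hq
        intro y hy
        obtain ⟨k, hk⟩ := hy
        have hdvd := hx y 1
        rw [zpow_one] at hdvd
        have hdvd2 : orderOf (x * y) ∣ q ^ (a + k) := by
          refine hdvd.trans (Nat.lcm_dvd ?_ ?_)
          · rw [hxo, pow_add]; exact Dvd.intro _ rfl
          · rw [hk, pow_add]; exact Dvd.intro_left _ rfl
        obtain ⟨i, _, hi⟩ := (Nat.dvd_prime_pow hq).mp hdvd2
        exact ⟨i, hi⟩
      · -- m ≥ 2 : split x into coprime parts and recurse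
        have hcop2 : Nat.Coprime (q ^ a) m := Nat.Coprime.pow_left a hcop
        have hbez : IsCoprime (q ^ a : ℤ) (m : ℤ) := by
          rw [Int.isCoprime_iff_gcd_eq_one]
          exact_mod_cast hcop2
        obtain ⟨u, v, huv⟩ := hbez
        set e1 : ℤ := v * m with he1
        set e2 : ℤ := u * q ^ a with he2
        have hsum : e2 + e1 = 1 := by rw [he1, he2]; linarith [huv]
        have hxN : x ^ (N : ℤ) = 1 := by
          rw [zpow_natCast, ← hN, pow_orderOf_eq_one]
        -- orders of the two parts
        have ho1 : orderOf (x ^ e1) ∣ q ^ a := by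
          apply orderOf_dvd_of_pow_eq_one
          rw [← zpow_natCast (x ^ e1) (q ^ a), ← zpow_mul]
          have : e1 * (q ^ a : ℕ) = (N : ℤ) * v := by
            rw [he1]; push_cast [← hsplit]; ring
          rw [this, zpow_mul, hxN, one_zpow]
        have ho2 : orderOf (x ^ e2) ∣ m := by
          apply orderOf_dvd_of_pow_eq_one
          rw [← zpow_natCast (x ^ e2) m, ← zpow_mul]
          have : e2 * (m : ℕ) = (N : ℤ) * u := by
            rw [he2]; push_cast [← hsplit]; ring
          rw [this, zpow_mul, hxN, one_zpow]
        -- condition for powers of x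
        have hcondpow : ∀ e : ℤ, ∀ y : G, ∀ n : ℤ,
            orderOf ((x ^ e) ^ n * y) ∣ Nat.lcm (orderOf ((x ^ e) ^ n)) (orderOf y) := by
          intro e y n
          have := hx y (e * n)
          rwa [zpow_mul] at this
        -- both parts in the Fitting subgroup by induction
        have hlt1 : orderOf (x ^ e1) < N := by
          have := Nat.le_of_dvd hqapos ho1
          have hlt : q ^ a < N := by
            rw [← hsplit]; nlinarith [hqapos]
          omega
        have hlt2 : orderOf (x ^ e2) < N := by
          have := Nat.le_of_dvd (by omega) ho2
          have hlt : m < N := by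
            rw [← hsplit]; nlinarith
          omega
        have hmem1 := ih _ hlt1 (x ^ e1) rfl (hcondpow e1)
        have hmem2 := ih _ hlt2 (x ^ e2) rfl (hcondpow e2)
        have hxeq : x = x ^ e2 * x ^ e1 := by
          rw [← zpow_add, hsum, zpow_one]
        rw [hxeq]
        exact mul_mem hmem2 hmem1

end Aux


/-- For a finite group `G` and positive integer `p`, with
`H_p(G) = {x : gcd(o(x), p) = 1}` and `R_p(G) = {x : gcd(o(x), p) ≠ 1}`, we have
`LCM(H_p(G), G) ∪ LCM(R_p(G), G) ⊆ Fit(G)`. -/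
theorem lcmSet_union_subset_fitting (G : Type*) [Group G] [Finite G]
    (p : ℕ) (hp : 0 < p) :
    lcmSet {x : G | Nat.gcd (orderOf x) p = 1} Set.univ ∪
        lcmSet {x : G | Nat.gcd (orderOf x) p ≠ 1} Set.univ ⊆
      (fittingSubgroup G : Set G) := by
  intro x hx
  have hcond : ∀ y : G, ∀ n : ℤ,
      orderOf (x ^ n * y) ∣ Nat.lcm (orderOf (x ^ n)) (orderOf y) := by
    rcases hx with h | h
    · exact fun y n => h.2 y (Set.mem_univ y) n
    · exact fun y n => h.2 y (Set.mem_univ y) n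
  exact mem_fitting_of_cond (orderOf x) x rfl hcond
end

section
/- Let G be a finite group. Then LC(G) is a nilpotent subgroup of G, and it is characteristic in G, i.e. invariant under every automorphism of G. -/
/-- `LC G`: the subgroup generated by `LCM(G)`. -/
def LC (G : Type*) [Group G] : Subgroup G := Subgroup.closure (lcmFull G)

namespace LCAux

variable {G : Type*} [Group G]

lemma orderOf_conj' (g x : G) : orderOf (g * x * g⁻¹) = orderOf x := by
  simpa using orderOf_injective (MulAut.conj g).toMonoidHom (MulEquiv.injective _) x

lemma lcmFull_mul_dvd {x : G} (hx : x ∈ lcmFull G) (z : G) :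
    orderOf (x * z) ∣ Nat.lcm (orderOf x) (orderOf z) := by
  simpa using hx z 1

lemma lcmFull_inv_mul_dvd {x : G} (hx : x ∈ lcmFull G) (z : G) :
    orderOf (x⁻¹ * z) ∣ Nat.lcm (orderOf x) (orderOf z) := by
  have := hx z (-1)
  simpa [orderOf_inv] using this

lemma lcmFull_zpow {x : G} (hx : x ∈ lcmFull G) (m : ℤ) : x ^ m ∈ lcmFull G := by
  intro z n
  rw [← zpow_mul]
  exact hx z (m * n)

lemma lcmFull_inv {x : G} (hx : x ∈ lcmFull G) : x⁻¹ ∈ lcmFull G := by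
  simpa using lcmFull_zpow hx (-1)

lemma lcmFull_conj {x : G} (hx : x ∈ lcmFull G) (g : G) : g * x * g⁻¹ ∈ lcmFull G := by
  intro z n
  have h1 : (g * x * g⁻¹) ^ n = g * x ^ n * g⁻¹ := by
    simpa [MulAut.conj] using ((MulAut.conj g).toMonoidHom.map_zpow x n).symm
  have h2 : g * x ^ n * g⁻¹ * z = g * (x ^ n * (g⁻¹ * z * g)) * g⁻¹ := by group
  have h3 : orderOf (g⁻¹ * z * g) = orderOf z := by
    have := orderOf_conj' g⁻¹ z
    simpa using this
  rw [h1, h2, orderOf_conj', orderOf_conj', ← h3]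
  exact hx (g⁻¹ * z * g) n

/-- Two elements of `lcmFull` of distinct prime power orders commute. -/
lemma commute_of_distinct_primes {x y : G} (hx : x ∈ lcmFull G) (hy : y ∈ lcmFull G)
    {p q a b : ℕ} (hp : p.Prime) (hq : q.Prime) (hpq : p ≠ q)
    (hox : orderOf x = p ^ a) (hoy : orderOf y = q ^ b) : Commute x y := by
  -- the commutator w = x⁻¹ y⁻¹ x y
  set w : G := x⁻¹ * (y⁻¹ * x * y) with hw
  have hwp : orderOf w ∣ p ^ a := by
    have h1 := lcmFull_inv_mul_dvd hx (y⁻¹ * x * y)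
    have h2 : orderOf (y⁻¹ * x * y) = orderOf x := by
      have := orderOf_conj' y⁻¹ x; simpa using this
    rw [h2, hox, Nat.lcm_self] at h1
    exact h1
  have hwq : orderOf w ∣ q ^ b := by
    have hconj : x⁻¹ * y⁻¹ * x ∈ lcmFull G := by
      have := lcmFull_conj (lcmFull_inv hy) x⁻¹
      simpa using this
    have h1 := lcmFull_mul_dvd hconj y
    have h2 : orderOf (x⁻¹ * y⁻¹ * x) = orderOf y := by
      have h3 : x⁻¹ * y⁻¹ * x = x⁻¹ * y⁻¹ * x⁻¹⁻¹ := by rw [inv_inv]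
      rw [h3, orderOf_conj', orderOf_inv]
    rw [h2, hoy, Nat.lcm_self] at h1
    have h4 : x⁻¹ * y⁻¹ * x * y = w := by rw [hw]; group
    rwa [h4] at h1
  have hcop : Nat.Coprime (p ^ a) (q ^ b) :=
    Nat.Coprime.pow _ _ ((Nat.coprime_primes hp hq).mpr hpq)
  have h1 : orderOf w = 1 := Nat.eq_one_of_dvd_coprimes hcop hwp hwq
  have hw1 : w = 1 := orderOf_eq_one_iff.mp h1
  have : x * y = y * x := by
    calc x * y = y * x * (x⁻¹ * (y⁻¹ * x * y)) := by group
    _ = y * x := by rw [← hw, hw1, mul_one]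
  exact this

end LCAux

namespace LCAux

variable {G : Type*} [Group G]

/-- Every element of the closure of a set of `p`-elements of `lcmFull` is a `p`-element. -/
lemma closure_pElements {p : ℕ} (hp : p.Prime) {T : Set G} (hT : T ⊆ lcmFull G)
    (hTp : ∀ x ∈ T, ∃ k, orderOf x = p ^ k) :
    ∀ x ∈ Subgroup.closure T, ∃ k, orderOf x = p ^ k := by
  intro x hx
  induction hx using Subgroup.closure_induction_left with
  | one => exact ⟨0, by simp⟩
  | mul_left s hs y hy ih =>
    obtain ⟨k, hk⟩ := hTp s hs
    obtain ⟨l, hl⟩ := ih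
    have h1 := lcmFull_mul_dvd (hT hs) y
    rw [hk, hl] at h1
    have h2 : orderOf (s * y) ∣ p ^ max k l :=
      h1.trans (Nat.lcm_dvd (pow_dvd_pow p (le_max_left k l))
        (pow_dvd_pow p (le_max_right k l)))
    obtain ⟨m, _, hm⟩ := (Nat.dvd_prime_pow hp).mp h2
    exact ⟨m, hm⟩
  | inv_mul_cancel s hs y hy ih =>
    obtain ⟨k, hk⟩ := hTp s hs
    obtain ⟨l, hl⟩ := ih
    have h1 := lcmFull_inv_mul_dvd (hT hs) y
    rw [hk, hl] at h1
    have h2 : orderOf (s⁻¹ * y) ∣ p ^ max k l :=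
      h1.trans (Nat.lcm_dvd (pow_dvd_pow p (le_max_left k l))
        (pow_dvd_pow p (le_max_right k l)))
    obtain ⟨m, _, hm⟩ := (Nat.dvd_prime_pow hp).mp h2
    exact ⟨m, hm⟩

/-- Every element of the closure of a set of `p'`-elements of `lcmFull` is a `p'`-element. -/
lemma closure_pPrimeElements {p : ℕ} (hp : p.Prime) {T : Set G} (hT : T ⊆ lcmFull G)
    (hTp : ∀ x ∈ T, ¬ p ∣ orderOf x) :
    ∀ x ∈ Subgroup.closure T, ¬ p ∣ orderOf x := by
  intro x hx
  induction hx using Subgroup.closure_induction_left with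
  | one => simpa using hp.one_lt.ne'
  | mul_left s hs y hy ih =>
    intro hdvd
    have h1 := lcmFull_mul_dvd (hT hs) y
    have h2 : p ∣ orderOf s * orderOf y :=
      (hdvd.trans h1).trans (Nat.lcm_dvd_mul _ _)
    rcases (Nat.Prime.dvd_mul hp).mp h2 with h | h
    exacts [hTp s hs h, ih h]
  | inv_mul_cancel s hs y hy ih =>
    intro hdvd
    have h1 := lcmFull_inv_mul_dvd (hT hs) y
    have h2 : p ∣ orderOf s * orderOf y :=
      (hdvd.trans h1).trans (Nat.lcm_dvd_mul _ _)
    rcases (Nat.Prime.dvd_mul hp).mp h2 with h | h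
    exacts [hTp s hs h, ih h]

/-- The set of elements of `lcmFull G` of prime power order. -/
def SPP (G : Type*) [Group G] : Set G :=
  {x : G | x ∈ lcmFull G ∧ ∃ p k : ℕ, p.Prime ∧ orderOf x = p ^ k}

/-- Every element of `lcmFull G` lies in the subgroup generated by the prime-power-order
elements of `lcmFull G`. -/
lemma lcmFull_subset_closure_SPP [Finite G] {x : G} (hx : x ∈ lcmFull G) :
    x ∈ Subgroup.closure (SPP G) := by
  suffices h : ∀ n : ℕ, ∀ x : G, x ∈ lcmFull G → orderOf x ≤ n →
      x ∈ Subgroup.closure (SPP G) from h (orderOf x) x hx le_rfl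
  intro n
  induction n with
  | zero => intro x _ hle; exact absurd hle (by simpa using (orderOf_pos x).ne')
  | succ n ih =>
    intro x hx hle
    by_cases hpp : ∃ p k : ℕ, p.Prime ∧ orderOf x = p ^ k
    · exact Subgroup.subset_closure ⟨hx, hpp⟩
    have ho1 : orderOf x ≠ 1 := by
      intro h1
      exact hpp ⟨2, 0, Nat.prime_two, by simpa using h1⟩
    set o := orderOf x with hodef
    have hopos : 0 < o := orderOf_pos x
    set p := o.minFac with hpdef
    have hp : p.Prime := Nat.minFac_prime ho1
    set c : ℕ := p ^ o.factorization p with hcdef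
    set m : ℕ := o / c with hmdef
    have hcm : c * m = o := Nat.ordProj_mul_ordCompl_eq_self o p
    have hcop : Nat.Coprime c m :=
      Nat.Coprime.pow_left _ (Nat.coprime_ordCompl hp hopos.ne')
    have hkpos : 0 < o.factorization p :=
      (Nat.Prime.factorization_pos_of_dvd hp hopos.ne' (Nat.minFac_dvd o))
    have hc2 : 2 ≤ c := by
      calc 2 ≤ p := hp.two_le
      _ = p ^ 1 := (pow_one p).symm
      _ ≤ c := Nat.pow_le_pow_right hp.pos hkpos
    have hmpos : 0 < m := by
      rcases Nat.eq_zero_or_pos m with h | h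
      · rw [h, mul_zero] at hcm; omega
      · exact h
    have hmlt : m < o := by
      have h2m : 2 * m ≤ o := by
        calc 2 * m ≤ c * m := Nat.mul_le_mul_right m hc2
        _ = o := hcm
      omega
    -- Bezout
    obtain ⟨u, v, huv⟩ := (Nat.Coprime.isCoprime hcop)
    have hxsplit : x ^ (u * (c:ℤ)) * x ^ (v * (m:ℤ)) = x := by
      rw [← zpow_add, huv, zpow_one]
    -- the c-component has order dividing m
    have hmem1 : x ^ (u * (c : ℤ)) ∈ Subgroup.closure (SPP G) := by
      have hord : orderOf (x ^ (u * (c : ℤ))) ∣ m := by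
        apply orderOf_dvd_of_pow_eq_one
        rw [← zpow_natCast, ← zpow_mul]
        have : u * (c : ℤ) * (m : ℤ) = (o : ℤ) * u := by
          push_cast [← hcm]; ring
        rw [this, zpow_mul, zpow_natCast, hodef, pow_orderOf_eq_one, one_zpow]
      refine ih _ (lcmFull_zpow hx _) ?_
      have := Nat.le_of_dvd hmpos hord
      omega
    -- the m-component has p-power order
    have hmem2 : x ^ (v * (m : ℤ)) ∈ Subgroup.closure (SPP G) := by
      have hord : orderOf (x ^ (v * (m : ℤ))) ∣ c := by
        apply orderOf_dvd_of_pow_eq_one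
        rw [← zpow_natCast, ← zpow_mul]
        have : v * (m : ℤ) * (c : ℤ) = (o : ℤ) * v := by
          push_cast [← hcm]; ring
        rw [this, zpow_mul, zpow_natCast, hodef, pow_orderOf_eq_one, one_zpow]
      obtain ⟨k, _, hk⟩ := (Nat.dvd_prime_pow hp).mp (hcdef ▸ hord)
      exact Subgroup.subset_closure ⟨lcmFull_zpow hx _, p, k, hp, hk⟩
    rw [← hxsplit]
    exact mul_mem hmem1 hmem2

end LCAux

namespace LCAux

variable {G : Type*} [Group G]

lemma commute_closure {G : Type*} [Group G] {s : Set G} {t : G}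
    (h : ∀ x ∈ s, Commute x t) : ∀ y ∈ Subgroup.closure s, Commute y t := by
  intro y hy
  induction hy using Subgroup.closure_induction with
  | mem x hx => exact h x hx
  | one => exact Commute.one_left t
  | mul x y hx hy ihx ihy => exact ihx.mul_left ihy
  | inv x hx ih => exact ih.inv_left

lemma nilpotent_closure_aux [Finite G] :
    ∀ n : ℕ, ∀ T : Set G, T ⊆ SPP G → Nat.card (Subgroup.closure T) < n →
      Group.IsNilpotent (Subgroup.closure T) := by
  intro n
  induction n with
  | zero => intro T _ h; exact absurd h (by simp [Nat.card_pos.ne'])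
  | succ n ih =>
    intro T hTS hcard
    set N := Subgroup.closure T with hNdef
    have hTl : T ⊆ lcmFull G := fun x hx => (hTS hx).1
    by_cases hP : ∃ p : ℕ, p.Prime ∧ IsPGroup p N
    · obtain ⟨p, hp, h⟩ := hP
      have : Fact p.Prime := ⟨hp⟩
      exact h.isNilpotent
    -- N is nontrivial and not a p-group; pick p ∣ |N|
    have hcard1 : Nat.card N ≠ 1 := by
      intro h1
      refine hP ⟨2, Nat.prime_two, fun g => ⟨0, ?_⟩⟩
      have : Subsingleton N := (Nat.card_eq_one_iff_unique.mp h1).1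
      simpa using Subsingleton.elim g 1
    obtain ⟨p, hp, hpdvd⟩ := Nat.exists_prime_and_dvd hcard1
    have : Fact p.Prime := ⟨hp⟩
    set Tp : Set G := {x ∈ T | ∃ k, orderOf x = p ^ k} with hTpdef
    set Tc : Set G := T \ Tp with hTcdef
    set Np := Subgroup.closure Tp with hNpdef
    set Cp := Subgroup.closure Tc with hCpdef
    have hTpS : Tp ⊆ SPP G := fun x hx => hTS hx.1
    have hTcS : Tc ⊆ SPP G := fun x hx => hTS hx.1
    have hNpN : Np ≤ N := Subgroup.closure_mono (fun x hx => hx.1)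
    have hCpN : Cp ≤ N := Subgroup.closure_mono (fun x hx => hx.1)
    have hsup : Np ⊔ Cp = N := by
      rw [hNpdef, hCpdef, ← Subgroup.closure_union, Set.union_diff_cancel (fun x hx => hx.1)]
    -- Np consists of p-elements
    have hNpel : ∀ x ∈ Np, ∃ k, orderOf x = p ^ k :=
      closure_pElements hp (fun x hx => hTl hx.1) (fun x hx => hx.2)
    -- Tc elements have prime power order for a prime ≠ p
    have hTcq : ∀ t ∈ Tc, ∃ q k : ℕ, q.Prime ∧ q ≠ p ∧ orderOf t = q ^ k := by
      intro t ht
      obtain ⟨q, k, hq, hk⟩ := (hTS ht.1).2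
      refine ⟨q, k, hq, ?_, hk⟩
      intro hqp
      exact ht.2 ⟨ht.1, ⟨k, by rw [hk, hqp]⟩⟩
    -- Cp consists of p'-elements
    have hCpel : ∀ x ∈ Cp, ¬ p ∣ orderOf x := by
      refine closure_pPrimeElements hp (fun x hx => hTl hx.1) ?_
      intro t ht hdvd
      obtain ⟨q, k, hq, hqp, hk⟩ := hTcq t ht
      rw [hk] at hdvd
      exact hqp ((Nat.prime_dvd_prime_iff_eq hp hq).mp (hp.dvd_of_dvd_pow hdvd)).symm
    -- generators commute across
    have hgen : ∀ s ∈ Tp, ∀ t ∈ Tc, Commute s t := by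
      intro s hs t ht
      obtain ⟨k, hk⟩ := hs.2
      obtain ⟨q, l, hq, hqp, hl⟩ := hTcq t ht
      exact commute_of_distinct_primes (hTl hs.1) (hTl ht.1) hp hq hqp.symm hk hl
    -- all of Np commutes with all of Cp
    have hcomm : ∀ a ∈ Np, ∀ b ∈ Cp, Commute a b := by
      have h1 : ∀ t ∈ Tc, ∀ a ∈ Np, Commute a t :=
        fun t ht a ha => commute_closure (fun s hs => hgen s hs t ht) a ha
      intro a ha b hb
      exact (commute_closure (fun t ht => (h1 t ht a ha).symm) b hb).symm
    -- Np ≠ N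
    have hNpne : Np ≠ N := by
      intro heq
      refine hP ⟨p, hp, fun g => ?_⟩
      have hg : (g : G) ∈ Np := by rw [heq]; exact g.2
      obtain ⟨k, hk⟩ := hNpel _ hg
      refine ⟨k, ?_⟩
      have horder : orderOf g = p ^ k := by
        rw [← hk, Subgroup.orderOf_coe]
      rw [← horder, pow_orderOf_eq_one]
    -- Cp ≠ N
    have hCpne : Cp ≠ N := by
      intro heq
      obtain ⟨g, hg⟩ := exists_prime_orderOf_dvd_card' (G := N) p hpdvd
      have hgmem : (g : G) ∈ Cp := by rw [heq]; exact g.2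
      have horder : orderOf (g : G) = p := by
        rw [Subgroup.orderOf_coe, hg]
      exact hCpel _ hgmem (horder ▸ dvd_refl p)
    -- strict cardinality decreases
    have hcard_lt : ∀ (K : Subgroup G), K ≤ N → K ≠ N → Nat.card K < n := by
      intro K hle hne
      have h1 : Nat.card K ≤ Nat.card N := Subgroup.card_le_of_le hle
      have h2 : Nat.card K ≠ Nat.card N := by
        intro h
        exact hne (Subgroup.eq_of_le_of_card_ge hle h.ge)
      omega
    have hNil1 : Group.IsNilpotent Np := ih Tp hTpS (hcard_lt Np hNpN hNpne)
    have hNil2 : Group.IsNilpotent Cp := ih Tc hTcS (hcard_lt Cp hCpN hCpne)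
    -- build the surjection Np × Cp →* N
    have hcomm' : ∀ (a : Np) (b : Cp), Commute (Np.subtype a) (Cp.subtype b) :=
      fun a b => hcomm a a.2 b b.2
    set φ : Np × Cp →* G := MonoidHom.noncommCoprod Np.subtype Cp.subtype hcomm' with hφdef
    have hφmem : ∀ y : Np × Cp, φ y ∈ N := by
      rintro ⟨a, b⟩
      exact mul_mem (hNpN a.2) (hCpN b.2)
    set ψ : Np × Cp →* N := φ.codRestrict N hφmem with hψdef
    have hψsurj : Function.Surjective ψ := by
      have hrange : N ≤ φ.range := by
        rw [← hsup]
        refine sup_le ?_ ?_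
        · intro a ha; exact ⟨(⟨a, ha⟩, 1), by simp [hφdef]⟩
        · intro b hb; exact ⟨(1, ⟨b, hb⟩), by simp [hφdef]⟩
      rintro ⟨x, hx⟩
      obtain ⟨y, hy⟩ := hrange hx
      exact ⟨y, Subtype.ext hy⟩
    haveI := hNil1
    haveI := hNil2
    exact nilpotent_of_surjective ψ hψsurj

end LCAux

namespace LCAux

variable {G : Type*} [Group G]

lemma lcmFull_image_subset (φ : G ≃* G) : ⇑φ '' lcmFull G ⊆ lcmFull G := by
  rintro _ ⟨x, hx, rfl⟩
  intro z n
  have h1 : ∀ w : G, orderOf (φ w) = orderOf w := fun w =>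
    orderOf_injective φ.toMonoidHom φ.injective w
  have key := hx (φ.symm z) n
  have e1 : φ x ^ n * z = φ (x ^ n * φ.symm z) := by
    rw [map_mul, map_zpow, MulEquiv.apply_symm_apply]
  have e2 : orderOf (φ x ^ n) = orderOf (x ^ n) := by rw [← map_zpow, h1]
  have e3 : orderOf (φ.symm z) = orderOf z :=
    orderOf_injective φ.symm.toMonoidHom φ.symm.injective z
  rw [e1, h1, e2, ← e3]
  exact key

lemma lcmFull_image (φ : G ≃* G) : ⇑φ '' lcmFull G = lcmFull G := by
  apply Set.Subset.antisymm (lcmFull_image_subset φ)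
  intro x hx
  exact ⟨φ.symm x, lcmFull_image_subset φ.symm ⟨x, hx, rfl⟩, by simp⟩

end LCAux

open LCAux

/-- For a finite group `G`, the subgroup `LC(G)` is nilpotent and characteristic. -/
theorem LC_nilpotent_characteristic (G : Type*) [Group G] [Finite G] :
    Group.IsNilpotent (LC G) ∧ (LC G).Characteristic := by
  constructor
  · have hEq : LC G = Subgroup.closure (SPP G) := by
      apply le_antisymm
      · exact (Subgroup.closure_le _).mpr fun x hx => lcmFull_subset_closure_SPP hx
      · exact Subgroup.closure_mono fun x hx => hx.1
    rw [hEq]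
    exact nilpotent_closure_aux (Nat.card (Subgroup.closure (SPP G)) + 1) (SPP G)
      (fun x hx => hx) (Nat.lt_succ_self _)
  · refine Subgroup.characteristic_iff_map_eq.mpr fun φ => ?_
    show (Subgroup.closure (lcmFull G)).map φ.toMonoidHom = Subgroup.closure (lcmFull G)
    rw [MonoidHom.map_closure]
    congr 1
    exact lcmFull_image φ
end

section
/- Let G be a finite group with trivial Fitting subgroup, Fit(G) = 1. Then LC(G) = 1. -/
section Aux

variable {G : Type*} [Group G]

theorem conj_orderOf (g x : G) : orderOf (g * x * g⁻¹) = orderOf x := by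
  have := orderOf_injective (MulAut.conj g).toMonoidHom (MulAut.conj g).injective x
  simpa using this

theorem lcmFull_zpow {x : G} (hx : x ∈ lcmFull G) (m : ℤ) : x ^ m ∈ lcmFull G := by
  intro z n; rw [← zpow_mul]; exact hx z (m * n)

theorem lcmFull_conj {x : G} (hx : x ∈ lcmFull G) (g : G) : g * x * g⁻¹ ∈ lcmFull G := by
  intro z n
  have h1 : (g * x * g⁻¹) ^ n = g * x ^ n * g⁻¹ := by
    rw [← MulAut.conj_apply, ← map_zpow, MulAut.conj_apply]
  have h3 : g * x ^ n * g⁻¹ * z = g * (x ^ n * (g⁻¹ * z * g)) * g⁻¹ := by group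
  have h4 : g⁻¹ * z * g = g⁻¹ * z * g⁻¹⁻¹ := by group
  have := hx (g⁻¹ * z * g) n
  rw [h1, h3, conj_orderOf, conj_orderOf]
  rw [h4, conj_orderOf] at this
  simpa using this

theorem lcmFull_inv {x : G} (hx : x ∈ lcmFull G) : x⁻¹ ∈ lcmFull G := by
  intro z n
  have := hx z (-n)
  rwa [inv_zpow, ← zpow_neg]

theorem lcmFull_key [Finite G] {x : G} (hx : x ∈ lcmFull G) {p : ℕ} (hp : p.Prime)
    (hord : orderOf x = p) (hfit : fittingSubgroup G = ⊥) : False := by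
  set S : Set G := Group.conjugatesOfSet {x} with hS
  have hSmem : ∀ s ∈ S, s ∈ lcmFull G ∧ orderOf s = p := by
    intro s hs
    rw [hS, Group.mem_conjugatesOfSet_iff] at hs
    obtain ⟨a, ha, hconj⟩ := hs
    rw [Set.mem_singleton_iff] at ha
    subst ha
    obtain ⟨c, hc⟩ := isConj_iff.mp hconj
    subst hc
    exact ⟨lcmFull_conj hx c, by rw [conj_orderOf, hord]⟩
  -- every element of the normal closure is a p-element
  have hpel : ∀ w ∈ Subgroup.closure S, ∃ k, orderOf w ∣ p ^ k := by
    intro w hw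
    induction hw using Subgroup.closure_induction_left with
    | one => exact ⟨0, by simp⟩
    | mul_left s hs y hy ih =>
      obtain ⟨k, hk⟩ := ih
      obtain ⟨hsl, hso⟩ := hSmem s hs
      refine ⟨k + 1, ?_⟩
      have := hsl y 1
      rw [zpow_one] at this
      refine this.trans (Nat.lcm_dvd ?_ ?_)
      · rw [hso]; exact dvd_pow_self p (Nat.succ_ne_zero k)
      · exact hk.trans (pow_dvd_pow p (Nat.le_succ k))
    | inv_mul_cancel s hs y hy ih =>
      obtain ⟨k, hk⟩ := ih
      obtain ⟨hsl, hso⟩ := hSmem s hs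
      refine ⟨k + 1, ?_⟩
      have := (lcmFull_inv hsl) y 1
      rw [zpow_one] at this
      refine this.trans (Nat.lcm_dvd ?_ ?_)
      · rw [orderOf_inv, hso]; exact dvd_pow_self p (Nat.succ_ne_zero k)
      · exact hk.trans (pow_dvd_pow p (Nat.le_succ k))
  set N : Subgroup G := Subgroup.normalClosure {x} with hN
  have hNnormal : N.Normal := Subgroup.normalClosure_normal
  have hNp : IsPGroup p N := by
    intro g
    obtain ⟨k, hk⟩ := hpel (g : G) g.2
    exact ⟨k, by ext; push_cast; exact orderOf_dvd_iff_pow_eq_one.mp hk⟩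
  haveI : Fact p.Prime := ⟨hp⟩
  have hNnil : Group.IsNilpotent N := hNp.isNilpotent
  have hle : N ≤ ⊥ := by
    rw [← hfit]
    exact le_iSup_of_le N (le_iSup_of_le hNnormal (le_iSup_of_le hNnil le_rfl))
  have hxN : x ∈ N := Subgroup.subset_normalClosure (Set.mem_singleton x)
  have : x = 1 := Subgroup.mem_bot.mp (hle hxN)
  rw [this, orderOf_one] at hord
  exact hp.one_lt.ne hord

end Aux

/-- If a finite group `G` has trivial Fitting subgroup, then `LC(G) = 1`. -/
theorem LC_eq_bot_of_fitting_eq_bot (G : Type*) [Group G] [Finite G]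
    (hfit : fittingSubgroup G = ⊥) : LC G = ⊥ := by
  have hsub : lcmFull G ⊆ {1} := by
    intro x hx
    by_contra hx1
    have ho1 : orderOf x ≠ 1 := by
      simpa [orderOf_eq_one_iff] using hx1
    obtain ⟨p, hp, hpd⟩ := Nat.exists_prime_and_dvd ho1
    set o := orderOf x with ho
    have hopos : 0 < o := orderOf_pos x
    set y := x ^ (o / p) with hy
    have hyl : y ∈ lcmFull G := by
      have := lcmFull_zpow hx ((o / p : ℕ) : ℤ)
      rwa [zpow_natCast] at this
    have hdvd : o / p ∣ o := Nat.div_dvd_of_dvd hpd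
    have hyo : orderOf y = p := by
      rw [hy, orderOf_pow, ← ho, Nat.gcd_eq_right hdvd, Nat.div_div_self hpd hopos.ne']
    exact lcmFull_key hyl hp hyo hfit
  rw [eq_bot_iff, LC]
  refine (Subgroup.closure_le ⊥).mpr ?_
  intro x hx
  simpa using hsub hx
end

section
/- Let G be a finite solvable group such that Fit(G) ≠ G, Fit(G) is a Hall subgroup of G (i.e. gcd(|Fit(G)|, |G|/|Fit(G)|) = 1), and every Sylow subgroup of Fit(G) belongs to CP2. Then Fit(G) = LC(G). -/
open Subgroup

set_option linter.unusedSectionVars false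
set_option linter.unusedVariables false

theorem cp2_pgroup_dvd {P : Type*} [Group P] {p : ℕ} (hp : p.Prime)
    (hP : IsPGroup p P) (hcp : IsCP2 P) {L : ℕ} (x y : P)
    (hx : orderOf x ∣ L) (hy : orderOf y ∣ L) : orderOf (x * y) ∣ L := by
  haveI : Fact p.Prime := ⟨hp⟩
  obtain ⟨a, ha⟩ := IsPGroup.iff_orderOf.mp hP x
  obtain ⟨b, hb⟩ := IsPGroup.iff_orderOf.mp hP y
  obtain ⟨c, hc⟩ := IsPGroup.iff_orderOf.mp hP (x * y)
  have hle := hcp x y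
  rw [ha, hb, hc] at hle
  rw [hc]
  rcases le_total a b with h | h
  · have : p ^ c ≤ p ^ b := le_trans hle (max_le (Nat.pow_le_pow_right hp.pos h) le_rfl)
    have hcb : c ≤ b := (Nat.pow_le_pow_iff_right hp.one_lt).mp this
    exact (pow_dvd_pow p hcb).trans (hb ▸ hy)
  · have : p ^ c ≤ p ^ a := le_trans hle (max_le le_rfl (Nat.pow_le_pow_right hp.pos h))
    have hca : c ≤ a := (Nat.pow_le_pow_iff_right hp.one_lt).mp this
    exact (pow_dvd_pow p hca).trans (ha ▸ hx)

theorem factA {N : Type*} [Group N] [Finite N] [Group.IsNilpotent N]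
    (hs : ∀ p : ℕ, p.Prime → ∀ P : Sylow p N, IsCP2 ↥(P : Subgroup N))
    (u v : N) : orderOf (u * v) ∣ Nat.lcm (orderOf u) (orderOf v) := by
  classical
  have hn : ∀ {p : ℕ} [Fact p.Prime] (P : Sylow p N), (P : Subgroup N).Normal := by
    intro p hp P
    have h := ((isNilpotent_of_finite_tfae (G := N)).out 0 3).mp
    exact h ‹Group.IsNilpotent N› p hp P
  let e := Sylow.directProductOfNormal hn
  set L := Nat.lcm (orderOf u) (orderOf v) with hL
  rw [orderOf_dvd_iff_pow_eq_one]
  have h1 : e.symm ((u * v) ^ L) = 1 → (u*v) ^ L = 1 := by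
    intro h; have := congrArg e h; simpa using this
  apply h1
  rw [map_pow, map_mul]
  funext p P
  have hp : (p : ℕ).Prime := Nat.prime_of_mem_primeFactors p.2
  simp only [Pi.pow_apply, Pi.mul_apply, Pi.one_apply]
  rw [← orderOf_dvd_iff_pow_eq_one]
  have hdvd : ∀ w : N, orderOf (e.symm w p P) ∣ orderOf w := by
    intro w
    have : e.symm w p P =
        ((Pi.evalMonoidHom _ P).comp ((Pi.evalMonoidHom _ p).comp e.symm.toMonoidHom)) w := rfl
    rw [this]
    exact orderOf_map_dvd _ w
  exact cp2_pgroup_dvd hp P.isPGroup' (hs p hp P) _ _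
    ((hdvd u).trans (Nat.dvd_lcm_left _ _)) ((hdvd v).trans (Nat.dvd_lcm_right _ _))

section Dir1
variable {G : Type*} [Group G] [Finite G] (F : Subgroup G) [F.Normal]

/-- order of an element of F as computed in G divides card F -/
theorem mem_orderOf_dvd_card {s : G} (hs : s ∈ F) : orderOf s ∣ Nat.card F :=
  Subgroup.orderOf_dvd_natCard F hs

theorem factA_amb (hFA : ∀ (u v : ↥F), orderOf (u * v) ∣ Nat.lcm (orderOf u) (orderOf v))
    {a b : G} (ha : a ∈ F) (hb : b ∈ F) :
    orderOf (a * b) ∣ Nat.lcm (orderOf a) (orderOf b) := by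
  have h := hFA ⟨a, ha⟩ ⟨b, hb⟩
  have e : ∀ (c : ↥F), orderOf c = orderOf (c : G) := fun c =>
    (orderOf_injective F.subtype Subtype.coe_injective c).symm
  rw [e, e, e] at h
  exact h

theorem dir1 (hFA : ∀ (u v : ↥F), orderOf (u * v) ∣ Nat.lcm (orderOf u) (orderOf v))
    (hhall : Nat.Coprime (Nat.card F) F.index)
    (s z : G) (hs : s ∈ F) : orderOf (s * z) ∣ Nat.lcm (orderOf s) (orderOf z) := by
  set c := Nat.card F with hc
  set i := F.index with hi
  set os := orderOf s with hos
  set oz := orderOf z with hoz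
  set L := Nat.lcm os oz with hLdef
  have hosc : os ∣ c := mem_orderOf_dvd_card F hs
  have hozci : oz ∣ c * i := Subgroup.card_mul_index F ▸ orderOf_dvd_natCard z
  have hLci : L ∣ c * i := Nat.lcm_dvd (hosc.trans (Dvd.intro i rfl)) hozci
  set N := Nat.gcd L i with hN
  set M := Nat.gcd L c with hM
  -- step (a): (s*z)^k = u * z^k with u ∈ F of order dividing os
  have stepa : ∀ k : ℕ, ∃ u : G, u ∈ F ∧ orderOf u ∣ os ∧ (s * z) ^ k = u * z ^ k := by
    intro k
    induction k with
    | zero => exact ⟨1, F.one_mem, by simp, by simp⟩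
    | succ k ih =>
      obtain ⟨u, hu, hou, heq⟩ := ih
      refine ⟨u * (z ^ k * s * (z ^ k)⁻¹), F.mul_mem hu (Subgroup.Normal.conj_mem ‹F.Normal› s hs _), ?_, ?_⟩
      · have hconj : orderOf (z ^ k * s * (z ^ k)⁻¹) = os := by
          have h := orderOf_injective (MulAut.conj (z ^ k)).toMonoidHom
            (MulAut.conj (z ^ k)).injective s
          rw [hos, ← h]
          rfl
        refine (factA_amb F hFA hu (Subgroup.Normal.conj_mem ‹F.Normal› s hs _)).trans ?_
        rw [hconj]
        exact Nat.lcm_dvd hou dvd_rfl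
      · rw [pow_succ, heq]
        group
  -- step (b) : z ^ N ∈ F
  have hozN_dvd : orderOf (z ^ N) ∣ Nat.gcd oz c := by
    rw [orderOf_dvd_iff_pow_eq_one, ← pow_mul]
    apply orderOf_dvd_iff_pow_eq_one.mp
    have h1 : oz ∣ Nat.gcd oz c * Nat.gcd oz i := by
      have := Nat.gcd_mul_right_dvd_mul_gcd oz c i
      rwa [Nat.gcd_eq_left hozci] at this
    have h2 : Nat.gcd oz i ∣ N := Nat.dvd_gcd ((Nat.gcd_dvd_left oz i).trans (Nat.dvd_lcm_right os oz)) (Nat.gcd_dvd_right oz i)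
    calc oz ∣ Nat.gcd oz c * Nat.gcd oz i := h1
      _ ∣ Nat.gcd oz c * N := Nat.mul_dvd_mul_left _ h2
      _ = N * Nat.gcd oz c := Nat.mul_comm _ _
  have hzN_mem : z ^ N ∈ F := by
    have h1 : orderOf ((QuotientGroup.mk' F) (z ^ N)) ∣ Nat.gcd oz c :=
      (orderOf_map_dvd _ _).trans hozN_dvd
    have h2 : orderOf ((QuotientGroup.mk' F) (z ^ N)) ∣ i := by
      rw [hi, Subgroup.index_eq_card]
      exact orderOf_dvd_natCard _
    have h3 : orderOf ((QuotientGroup.mk' F) (z ^ N)) ∣ Nat.gcd c i :=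
      Nat.dvd_gcd ((h1.trans (Nat.gcd_dvd_right oz c))) h2
    rw [Nat.Coprime.gcd_eq_one hhall] at h3
    have : (QuotientGroup.mk' F) (z ^ N) = 1 := orderOf_eq_one_iff.mp (Nat.dvd_one.mp h3)
    rwa [← QuotientGroup.eq_one_iff]
  -- step (c)
  obtain ⟨u, hu, hou, heq⟩ := stepa N
  have houM : orderOf u ∣ M := Nat.dvd_gcd (hou.trans (Nat.dvd_lcm_left os oz)) (hou.trans hosc)
  have hozNM : orderOf (z ^ N) ∣ M := by
    refine Nat.dvd_gcd ?_ (hozN_dvd.trans (Nat.gcd_dvd_right oz c))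
    exact ((hozN_dvd.trans (Nat.gcd_dvd_left oz c)).trans (Nat.dvd_lcm_right os oz))
  have hwM : orderOf ((s * z) ^ N) ∣ M := by
    rw [heq]
    exact (factA_amb F hFA hu hzN_mem).trans (Nat.lcm_dvd houM hozNM)
  have hfin : orderOf (s * z) ∣ N * M := by
    rw [orderOf_dvd_iff_pow_eq_one, pow_mul]
    exact orderOf_dvd_iff_pow_eq_one.mp hwM
  refine hfin.trans ?_
  have hcop : Nat.Coprime N M :=
    Nat.Coprime.coprime_dvd_left (Nat.gcd_dvd_right L i)
      (Nat.Coprime.coprime_dvd_right (Nat.gcd_dvd_right L c) hhall.symm)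
  exact Nat.Coprime.mul_dvd_of_dvd_of_dvd hcop (Nat.gcd_dvd_left L i) (Nat.gcd_dvd_left L c)
end Dir1

/-- p-elements of a finite nilpotent group lie in the (unique, normal) Sylow p-subgroup,
given that this Sylow subgroup is normal. -/
theorem pelt_mem_sylow {H : Type*} [Group H] [Finite H] {p : ℕ} [Fact p.Prime]
    (PH : Sylow p H) (hPH : (PH : Subgroup H).Normal) {h : H} {k : ℕ}
    (hh : orderOf h = p ^ k) : h ∈ (PH : Subgroup H) := by
  have hP : IsPGroup p (Subgroup.zpowers h) := by
    rw [IsPGroup.iff_card]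
    exact ⟨k, by rw [Nat.card_zpowers, hh]⟩
  obtain ⟨Q, hQ⟩ := hP.exists_le_sylow
  haveI := Sylow.unique_of_normal PH hPH
  have : Q = PH := Subsingleton.elim _ _
  exact this ▸ hQ (Subgroup.mem_zpowers h)

/-- image of a normal nilpotent subgroup in the quotient by a normal p-subgroup containing
its Sylow p-subgroup has order prime to p -/
theorem not_dvd_card_map {G : Type*} [Group G] [Finite G] {p : ℕ} [Fact p.Prime]
    {H W : Subgroup G} [W.Normal] (hHnil : Group.IsNilpotent ↥H)
    (PH : Sylow p ↥H) (hPW : (PH : Subgroup ↥H).map H.subtype ≤ W) :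
    ¬ p ∣ Nat.card (H.map (QuotientGroup.mk' W)) := by
  intro hdvd
  have hPHn : (PH : Subgroup ↥H).Normal := by
    have hstep := ((isNilpotent_of_finite_tfae (G := ↥H)).out 0 3).mp
    exact hstep hHnil p inferInstance PH
  set q := QuotientGroup.mk' W with hq
  set φ := q.comp H.subtype with hφ
  obtain ⟨g, hg⟩ := exists_prime_orderOf_dvd_card' p hdvd
  -- g.val is in the range of φ
  obtain ⟨h, hh, hval⟩ := g.2
  set h' : ↥H := ⟨h, hh⟩
  have hval' : φ h' = g.val := hval
  have hgval : orderOf (g.val) = p := by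
    rw [← hg]
    exact orderOf_injective (H.map q).subtype Subtype.coe_injective g
  have hpdvd : p ∣ orderOf h' := by
    have := orderOf_map_dvd φ h'
    rw [hval', hgval] at this
    exact this
  set oh := orderOf h' with hoh
  have hoh0 : oh ≠ 0 := (orderOf_pos h').ne'
  set k := oh.factorization p with hk
  set m := oh / p ^ k with hm
  have hmd : p ^ k * m = oh := Nat.ordProj_mul_ordCompl_eq_self oh p
  have hpm : ¬ p ∣ m := Nat.not_dvd_ordCompl Fact.out hoh0
  have hordm : orderOf (h' ^ m) = p ^ k := by
    rw [orderOf_pow, ← hoh]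
    have hmdvd : m ∣ oh := Dvd.intro_left _ hmd
    rw [Nat.gcd_eq_right hmdvd]
    rw [← hmd]
    rw [Nat.mul_div_cancel]
    exact Nat.pos_of_ne_zero (fun h => by simp [h] at hmd; exact hoh0 hmd.symm)
  have hmem : h' ^ m ∈ (PH : Subgroup ↥H) := pelt_mem_sylow PH hPHn hordm
  have : φ (h' ^ m) = 1 := by
    have hW : (h' ^ m : ↥H).val ∈ W := hPW ⟨h' ^ m, hmem, rfl⟩
    show q ((h' ^ m : ↥H).val) = 1
    rwa [QuotientGroup.mk'_apply, QuotientGroup.eq_one_iff]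
  rw [map_pow, hval'] at this
  have : orderOf g.val ∣ m := orderOf_dvd_of_pow_eq_one this
  rw [hgval] at this
  exact hpm this

theorem fitting_aux {G : Type*} [Group G] [Finite G] (H K : Subgroup G)
    [hHn : H.Normal] [hKn : K.Normal]
    (hHnil : Group.IsNilpotent ↥H) (hKnil : Group.IsNilpotent ↥K)
    (hsup : H ⊔ K = ⊤) : Group.IsNilpotent G := by
  classical
  have tfae4 := ((isNilpotent_of_finite_tfae (G := G)).out 3 0).mp
  apply tfae4
  intro p hp R
  obtain ⟨PH⟩ : Nonempty (Sylow p ↥H) := inferInstance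
  obtain ⟨PK⟩ : Nonempty (Sylow p ↥K) := inferInstance
  have hPHn : (PH : Subgroup ↥H).Normal := by
    have hstep := ((isNilpotent_of_finite_tfae (G := ↥H)).out 0 3).mp
    exact hstep hHnil p inferInstance PH
  have hPKn : (PK : Subgroup ↥K).Normal := by
    have hstep := ((isNilpotent_of_finite_tfae (G := ↥K)).out 0 3).mp
    exact hstep hKnil p inferInstance PK
  haveI : (PH : Subgroup ↥H).Characteristic := Sylow.characteristic_of_normal PH hPHn
  haveI : (PK : Subgroup ↥K).Characteristic := Sylow.characteristic_of_normal PK hPKn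
  set P := (PH : Subgroup ↥H).map H.subtype with hP
  set Q := (PK : Subgroup ↥K).map K.subtype with hQ
  haveI hPn : P.Normal := ConjAct.normal_of_characteristic_of_normal
  haveI hQn : Q.Normal := ConjAct.normal_of_characteristic_of_normal
  set W := P ⊔ Q with hW
  haveI hWn : W.Normal := Subgroup.sup_normal P Q
  have hWp : IsPGroup p ↥W :=
    IsPGroup.to_sup_of_normal_right (PH.isPGroup'.map H.subtype) (PK.isPGroup'.map K.subtype)
  -- p does not divide the index of W
  have hpind : ¬ p ∣ W.index := by
    rw [Subgroup.index_eq_card]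
    set q := QuotientGroup.mk' W with hq
    have hqsurj : Function.Surjective q := QuotientGroup.mk'_surjective W
    have hHq := not_dvd_card_map (W := W) hHnil PH le_sup_left
    have hKq := not_dvd_card_map (W := W) hKnil PK le_sup_right
    have hsupq : (H.map q) ⊔ (K.map q) = ⊤ := by
      rw [← Subgroup.map_sup, hsup, Subgroup.map_top_of_surjective q hqsurj]
    haveI : (H.map q).Normal := hHn.map q hqsurj
    have hindex : (H.map q).index = (H.map q).relIndex (K.map q) := by
      rw [← Subgroup.relIndex_top_right, ← hsupq, Subgroup.relIndex_sup_left]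
    have hcard : Nat.card (G ⧸ W) = Nat.card (H.map q) * (H.map q).index :=
      (Subgroup.card_mul_index (H.map q)).symm
    rw [hcard]
    intro hdvd
    rcases (Nat.Prime.dvd_mul Fact.out).mp hdvd with h | h
    · exact hHq h
    · apply hKq
      refine h.trans ?_
      rw [hindex]
      have : (H.map q).relIndex (K.map q) = ((H.map q).subgroupOf (K.map q)).index := rfl
      rw [this]
      exact Subgroup.index_dvd_card ((H.map q).subgroupOf (K.map q))
  -- W has Sylow cardinality
  obtain ⟨n, hn⟩ := IsPGroup.iff_card.mp hWp
  have hppos : p ≠ 0 := (Fact.out : p.Prime).pos.ne'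
  have hWcard : Nat.card W = p ^ (Nat.card G).factorization p := by
    rw [hn]
    congr 1
    have hGcard : Nat.card G = p ^ n * W.index := by rw [← Subgroup.card_mul_index W, hn]
    rw [hGcard, Nat.factorization_mul (pow_ne_zero n hppos) Subgroup.index_ne_zero_of_finite,
      Finsupp.add_apply, (Fact.out : p.Prime).factorization_pow, Finsupp.single_apply,
      Nat.factorization_eq_zero_of_not_dvd hpind]
    simp
  -- W is contained in some Sylow subgroup, and equals it by cardinality
  obtain ⟨R₀, hR₀⟩ := hWp.exists_le_sylow
  have hcardR₀ : Nat.card R₀ = p ^ (Nat.card G).factorization p := R₀.card_eq_multiplicity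
  have hWR₀ : W = (R₀ : Subgroup G) :=
    Subgroup.eq_of_le_of_card_ge hR₀ (le_of_eq (hcardR₀.trans hWcard.symm))
  haveI hR₀n : (R₀ : Subgroup G).Normal := hWR₀ ▸ hWn
  obtain ⟨g, hg⟩ := MulAction.exists_smul_eq G R₀ R
  rw [Sylow.smul_eq_of_normal] at hg
  rw [← hg]
  exact hR₀n

theorem le_fitting {G : Type*} [Group G] {H : Subgroup G} (h1 : H.Normal)
    (h2 : Group.IsNilpotent ↥H) : H ≤ fittingSubgroup G :=
  le_iSup_of_le H (le_iSup_of_le h1 (le_iSup_of_le h2 le_rfl))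

theorem fitting_spec (G : Type*) [Group G] [Finite G] :
    (fittingSubgroup G).Normal ∧ Group.IsNilpotent ↥(fittingSubgroup G) := by
  classical
  set S : Set (Subgroup G) := {H | H.Normal ∧ Group.IsNilpotent ↥H} with hS
  have hbot : (⊥ : Subgroup G) ∈ S := ⟨inferInstance, inferInstance⟩
  obtain ⟨N, hNS, hNmax⟩ := Set.Finite.exists_maximalFor id S (Set.toFinite S) ⟨⊥, hbot⟩
  have hmax : ∀ H ∈ S, H ≤ N := by
    intro H hH
    haveI hHn := hH.1
    haveI hNn := hNS.1
    set J := H ⊔ N with hJ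
    haveI hJn : J.Normal := Subgroup.sup_normal H N
    have hHJ : H ≤ J := le_sup_left
    have hNJ : N ≤ J := le_sup_right
    have hnilJ : Group.IsNilpotent ↥J := by
      have hsub : H.subgroupOf J ⊔ N.subgroupOf J = ⊤ := by
        apply Subgroup.map_injective (f := J.subtype) J.subtype_injective
        rw [Subgroup.map_sup, subgroupOf_map_subtype, subgroupOf_map_subtype]
        have : (⊤ : Subgroup ↥J).map J.subtype = J := by
          rw [← MonoidHom.range_eq_map, Subgroup.range_subtype]
        rw [this, inf_of_le_left hHJ, inf_of_le_left hNJ]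
      exact fitting_aux (H.subgroupOf J) (N.subgroupOf J)
        (@nilpotent_of_mulEquiv _ _ _ _ hH.2 (subgroupOfEquivOfLe hHJ).symm)
        (@nilpotent_of_mulEquiv _ _ _ _ hNS.2 (subgroupOfEquivOfLe hNJ).symm) hsub
    have : J ∈ S := ⟨hJn, hnilJ⟩
    have := hNmax this hNJ
    simp only [id] at this
    exact hHJ.trans this
  have hFN : fittingSubgroup G = N := by
    apply le_antisymm
    · exact iSup_le fun H => iSup_le fun h1 => iSup_le fun h2 => hmax H ⟨h1, h2⟩
    · exact le_fitting hNS.1 hNS.2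
  rw [hFN]
  exact ⟨hNS.1, hNS.2⟩

theorem perfect_eq_bot {X : Type*} [Group X] [Group.IsSolvable X] {N : Subgroup X}
    (h : ⁅N, N⁆ = N) : N = ⊥ := by
  obtain ⟨n, hn⟩ := Group.IsSolvable.solvable (G := X)
  rw [eq_bot_iff, ← hn]
  clear hn
  induction n with
  | zero => exact le_top
  | succ n ih =>
    rw [derivedSeries_succ, ← h]
    exact Subgroup.commutator_mono ih ih

theorem cent_normal {G : Type*} [Group G] (F : Subgroup G) [hF : F.Normal] :
    (Subgroup.centralizer (F : Set G)).Normal := by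
  constructor
  intro n hn g
  rw [Subgroup.mem_centralizer_iff] at hn ⊢
  intro h hh
  have h1 : g⁻¹ * h * g ∈ (F : Set G) := hF.conj_mem' h hh g
  have h2 := hn _ h1
  calc h * (g * n * g⁻¹) = g * ((g⁻¹ * h * g) * n) * g⁻¹ := by group
    _ = g * (n * (g⁻¹ * h * g)) * g⁻¹ := by rw [h2]
    _ = g * n * g⁻¹ * h := by group

/-- For a finite solvable group, the centralizer of the Fitting subgroup is contained
in the Fitting subgroup. -/
theorem cent_fitting_le (G : Type*) [Group G] [Finite G] [Group.IsSolvable G] :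
    Subgroup.centralizer ((fittingSubgroup G : Subgroup G) : Set G) ≤ fittingSubgroup G := by
  classical
  set F := fittingSubgroup G with hF
  haveI hFnorm : F.Normal := (fitting_spec G).1
  set C := Subgroup.centralizer (F : Set G) with hC
  haveI hCnorm : C.Normal := cent_normal F
  by_contra hCF
  set Z := C ⊓ F with hZ
  haveI hZnorm : Z.Normal := Subgroup.normal_inf_normal C F
  set q := QuotientGroup.mk' Z with hq
  have hqsurj : Function.Surjective q := QuotientGroup.mk'_surjective Z
  set Cb := C.map q with hCb
  haveI hCbn : Cb.Normal := hCnorm.map q hqsurj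
  have hkerq : q.ker = Z := QuotientGroup.ker_mk' Z
  have hCbne : Cb ≠ ⊥ := by
    intro hbot
    rw [Subgroup.map_eq_bot_iff, hkerq] at hbot
    exact hCF (hbot.trans inf_le_right)
  -- a minimal nontrivial normal subgroup of G/Z inside Cb
  set S : Set (Subgroup (G ⧸ Z)) := {A | A ≠ ⊥ ∧ A.Normal ∧ A ≤ Cb} with hSdef
  obtain ⟨M, hMS, hMmin⟩ := Set.Finite.exists_minimalFor id S (Set.toFinite S)
    ⟨Cb, hCbne, hCbn, le_rfl⟩
  obtain ⟨hMne, hMn, hMC⟩ := hMS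
  haveI := hMn
  -- M is abelian
  have hMab : ⁅M, M⁆ = ⊥ := by
    by_contra hne
    have hcomm : ⁅M, M⁆ ∈ S := ⟨hne, inferInstance, (Subgroup.commutator_le_left M M ).trans hMC⟩
    have hle : ⁅M, M⁆ ≤ M := Subgroup.commutator_le_left M M
    have heq := hMmin hcomm hle
    simp only [id] at heq
    exact hMne (perfect_eq_bot (le_antisymm hle heq))
  -- pull back M to G
  set Mc := M.comap q with hMc
  haveI hMcn : Mc.Normal := Subgroup.normal_comap q
  have hmapMc : Mc.map q = M := Subgroup.map_comap_eq_self_of_surjective hqsurj M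
  have hMcC : Mc ≤ C := by
    have h1 : Mc ≤ (C.map q).comap q := Subgroup.comap_mono hMC
    rwa [Subgroup.comap_map_eq, hkerq, sup_of_le_left (inf_le_left : Z ≤ C)] at h1
  have hcommZ : ⁅Mc, Mc⁆ ≤ Z := by
    rw [← hkerq, ← Subgroup.map_eq_bot_iff, Subgroup.map_commutator, hmapMc, hMab]
  -- Mc is nilpotent of class ≤ 2
  have hMcnil : Group.IsNilpotent ↥Mc := by
    rw [_root_.nilpotent_iff_lowerCentralSeries]
    refine ⟨2, ?_⟩
    rw [eq_bot_iff]
    show (⊤ : Subgroup ↥Mc).lowerCentralSeries 2 ≤ ⊥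
    rw [Subgroup.lowerCentralSeries_succ]
    refine (Subgroup.closure_le ⊥).mpr ?_
    rintro x ⟨g1, hg1, g2, _, rfl⟩
    simp only [SetLike.mem_coe, Subgroup.mem_bot]
    have hg1' : (g1 : G) ∈ ⁅Mc, Mc⁆ := by
      have h1 : g1 ∈ ⁅(⊤ : Subgroup ↥Mc), (⊤ : Subgroup ↥Mc)⁆ := by
        have h0 : (⊤ : Subgroup ↥Mc).lowerCentralSeries 1 = ⁅(⊤ : Subgroup ↥Mc), (⊤ : Subgroup ↥Mc)⁆ := by
          rw [Subgroup.lowerCentralSeries_succ, Subgroup.lowerCentralSeries_zero, Subgroup.commutator_def]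
        rwa [h0] at hg1
      have h2 : (g1 : G) ∈ Subgroup.map Mc.subtype ⁅(⊤ : Subgroup ↥Mc), (⊤ : Subgroup ↥Mc)⁆ :=
        Subgroup.mem_map_of_mem _ h1
      rwa [Subgroup.map_commutator, ← MonoidHom.range_eq_map, Subgroup.range_subtype] at h2
    have hg1Z : (g1 : G) ∈ Z := hcommZ hg1'
    have hcomm : (g2 : G) * (g1 : G) = (g1 : G) * (g2 : G) := by
      have hg2C : (g2 : G) ∈ C := hMcC g2.2
      rw [hC, Subgroup.mem_centralizer_iff] at hg2C
      exact (hg2C (g1 : G) (hg1Z.2 : (g1:G) ∈ F)).symm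
    rw [commutatorElement_eq_one_iff_commute]
    exact Subtype.ext (by simp only [Subgroup.coe_mul]; exact hcomm.symm)
  -- contradiction: Mc ≤ F, so M = ⊥
  have hMcF : Mc ≤ F := le_fitting hMcn hMcnil
  have hMcZ : Mc ≤ Z := le_inf hMcC hMcF
  apply hMne
  rw [← hmapMc, Subgroup.map_eq_bot_iff, hkerq]
  exact hMcZ

theorem dir2 {G : Type*} [Group G] [Finite G] [Group.IsSolvable G]
    (hhall : Nat.Coprime (Nat.card (fittingSubgroup G)) (fittingSubgroup G).index)
    {x : G} (hx : x ∈ lcmFull G) : x ∈ fittingSubgroup G := by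
  classical
  set F := fittingSubgroup G with hF
  haveI hFnorm : F.Normal := (fitting_spec G).1
  set c := Nat.card F with hc
  set i := F.index with hi
  set m := orderOf x with hm
  have hmci : m ∣ c * i := Subgroup.card_mul_index F ▸ orderOf_dvd_natCard x
  have hsplit : m ∣ Nat.gcd m c * Nat.gcd m i := by
    have := Nat.gcd_mul_right_dvd_mul_gcd m c i
    rwa [Nat.gcd_eq_left hmci] at this
  set a := Nat.gcd m c with ha
  set x' := x ^ a with hx'
  have hox' : orderOf x' ∣ Nat.gcd m i := by
    rw [hx', orderOf_dvd_iff_pow_eq_one, ← pow_mul]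
    apply orderOf_dvd_iff_pow_eq_one.mp
    rw [← hm]
    exact hsplit
  -- x' centralizes F
  have hcent : x' ∈ Subgroup.centralizer (F : Set G) := by
    rw [Subgroup.mem_centralizer_iff]
    intro g hg
    -- apply the lcm property with z := g * x'⁻¹ * g⁻¹
    set z := g * x'⁻¹ * g⁻¹ with hz
    have hoz : orderOf z = orderOf x' := by
      have h1 := orderOf_injective (MulAut.conj g).toMonoidHom (MulAut.conj g).injective x'⁻¹
      have h2 : orderOf x'⁻¹ = orderOf x' := orderOf_inv x'
      rw [← h2, ← h1]
      rfl
    have hkey := hx z (a : ℤ)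
    rw [zpow_natCast, ← hx'] at hkey
    have hkey2 : orderOf (x' * z) ∣ orderOf x' := by
      rw [hoz, Nat.lcm_self] at hkey
      exact hkey
    have hmem : x' * z ∈ F := by
      have h1 : (x' * g * x'⁻¹) * g⁻¹ ∈ F :=
        F.mul_mem (hFnorm.conj_mem g hg x') (F.inv_mem hg)
      have h2 : x' * z = (x' * g * x'⁻¹) * g⁻¹ := by rw [hz]; group
      rw [h2]
      exact h1
    have hword : orderOf (x' * z) ∣ Nat.gcd c i := by
      refine Nat.dvd_gcd ?_ (hkey2.trans (hox'.trans (Nat.gcd_dvd_right m i)))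
      exact Subgroup.orderOf_dvd_natCard F hmem
    rw [Nat.Coprime.gcd_eq_one hhall] at hword
    have hone : x' * z = 1 := orderOf_eq_one_iff.mp (Nat.dvd_one.mp hword)
    -- derive commuting
    rw [hz] at hone
    have : x' * g * x'⁻¹ = g := by
      have := congrArg (fun w => w * g) hone
      simpa [mul_assoc] using this
    calc g * x' = (x' * g * x'⁻¹) * x' := by rw [this]
      _ = x' * g := by group
  have hx'F : x' ∈ F := cent_fitting_le G hcent
  have hx'1 : x' = 1 := by
    have h1 : orderOf x' ∣ c := Subgroup.orderOf_dvd_natCard F hx'F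
    have h2 : orderOf x' ∣ Nat.gcd c i :=
      Nat.dvd_gcd h1 (hox'.trans (Nat.gcd_dvd_right m i))
    rw [Nat.Coprime.gcd_eq_one hhall] at h2
    exact orderOf_eq_one_iff.mp (Nat.dvd_one.mp h2)
  have hmc : m ∣ c := by
    have : m ∣ a := orderOf_dvd_of_pow_eq_one hx'1
    exact this.trans (Nat.gcd_dvd_right m c)
  -- x is a π-element, hence in F
  have hq1 : orderOf ((QuotientGroup.mk' F) x) ∣ Nat.gcd c i := by
    refine Nat.dvd_gcd (((orderOf_map_dvd _ x).trans hmc)) ?_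
    rw [hi, Subgroup.index_eq_card]
    exact orderOf_dvd_natCard _
  rw [Nat.Coprime.gcd_eq_one hhall] at hq1
  have : (QuotientGroup.mk' F) x = 1 := orderOf_eq_one_iff.mp (Nat.dvd_one.mp hq1)
  rwa [← QuotientGroup.eq_one_iff]


/-- Let `G` be a finite solvable group whose Fitting subgroup is a proper Hall subgroup
all of whose Sylow subgroups lie in `CP2`. Then `Fit(G) = LC(G)`. -/
theorem fitting_eq_LC (G : Type*) [Group G] [Finite G] [Group.IsSolvable G]
    (hne : fittingSubgroup G ≠ ⊤)
    (hhall : Nat.Coprime (Nat.card (fittingSubgroup G)) (fittingSubgroup G).index)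
    (hsyl : ∀ (p : ℕ), p.Prime → ∀ P : Sylow p (fittingSubgroup G),
      IsCP2 ↥(P : Subgroup (fittingSubgroup G))) :
    fittingSubgroup G = LC G := by
  classical
  haveI hFnorm : (fittingSubgroup G).Normal := (fitting_spec G).1
  haveI hFnil : Group.IsNilpotent ↥(fittingSubgroup G) := (fitting_spec G).2
  apply le_antisymm
  · -- Fit(G) ≤ LC(G)
    intro x hxF
    apply Subgroup.subset_closure
    intro z n
    have hxn : x ^ n ∈ fittingSubgroup G := Subgroup.zpow_mem _ hxF n
    exact dir1 (fittingSubgroup G) (fun u v => factA hsyl u v) hhall (x ^ n) z hxn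
  · -- LC(G) ≤ Fit(G)
    exact (Subgroup.closure_le _).mpr (fun x hx => dir2 hhall hx)
end

section
/- Let G be a finite group such that every element of G ∖ LCM(G) has order equal to the exponent of G. Then G is nilpotent. -/
private lemma orderOf_conj_aux {G : Type*} [Group G] (x z : G) :
    orderOf (z⁻¹ * x * z) = orderOf x := by
  have hsc : SemiconjBy z⁻¹ x (z⁻¹ * x * z) := by
    unfold SemiconjBy; group
  exact (hsc.orderOf_eq).symm

/-- If every element of `G \ LCM(G)` has order equal to the exponent of `G`, then the
finite group `G` is nilpotent. -/
theorem nilpotent_of_complement_lcmFull_full_order (G : Type*) [Group G] [Finite G]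
    (h : ∀ x : G, x ∉ lcmFull G → orderOf x = Monoid.exponent G) :
    Group.IsNilpotent G := by
  classical
  -- Step 1: the full lcm property holds for all pairs.
  have key : ∀ x z : G, orderOf (x * z) ∣ Nat.lcm (orderOf x) (orderOf z) := by
    intro x z
    by_contra hcon
    have hx : x ∉ lcmFull G := by
      intro hx
      exact hcon (by simpa using hx z 1)
    have hz : z ∉ lcmFull G := by
      intro hz
      have h2 := hz (z⁻¹ * x * z) 1
      simp only [zpow_one] at h2
      rw [show z * (z⁻¹ * x * z) = x * z by group, orderOf_conj_aux] at h2
      exact hcon (h2.trans (by rw [Nat.lcm_comm]))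
    have ex := h x hx
    have ez := h z hz
    refine hcon ?_
    rw [ex, ez, Nat.lcm_self]
    exact Monoid.order_dvd_exponent _
  -- Step 2: for each prime, the set of p-elements is a normal subgroup,
  -- so every Sylow subgroup is normal.
  have sylow_normal : ∀ (p : ℕ) (_hp : Fact p.Prime) (P : Sylow p G),
      (↑P : Subgroup G).Normal := by
    intro p hp P
    set H : Subgroup G :=
      { carrier := {g : G | ∃ k : ℕ, orderOf g = p ^ k}
        one_mem' := ⟨0, by simp⟩
        mul_mem' := by
          rintro a b ⟨k, hk⟩ ⟨l, hl⟩
          have hdvd : orderOf (a * b) ∣ p ^ (k + l) := by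
            refine (key a b).trans (Nat.lcm_dvd ?_ ?_)
            · rw [hk]; exact pow_dvd_pow _ (Nat.le_add_right _ _)
            · rw [hl]; exact pow_dvd_pow _ (Nat.le_add_left _ _)
          obtain ⟨c, _, hc⟩ := (Nat.dvd_prime_pow hp.out).mp hdvd
          exact ⟨c, hc⟩
        inv_mem' := by
          rintro a ⟨k, hk⟩
          exact ⟨k, by rwa [orderOf_inv]⟩ } with hH
    have hHnormal : H.Normal := by
      constructor
      rintro n ⟨k, hk⟩ g
      refine ⟨k, ?_⟩
      have : g * n * g⁻¹ = (g⁻¹)⁻¹ * n * g⁻¹ := by group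
      rw [this, orderOf_conj_aux]
      exact hk
    have hHp : IsPGroup p H := by
      intro g
      obtain ⟨k, hk⟩ := g.2
      refine ⟨k, ?_⟩
      have hg : (g : G) ^ p ^ k = 1 := by
        rw [← hk]; exact pow_orderOf_eq_one _
      exact Subtype.ext (by simpa using hg)
    have hPH : (↑P : Subgroup G) ≤ H := by
      intro g hg
      obtain ⟨k, hk⟩ := P.isPGroup' ⟨g, hg⟩
      have hg' : g ^ p ^ k = 1 := by
        have := congrArg (Subtype.val) hk
        simpa using this
      obtain ⟨c, _, hc⟩ := (Nat.dvd_prime_pow hp.out).mp (orderOf_dvd_of_pow_eq_one hg')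
      exact ⟨c, hc⟩
    have hHP : H = ↑P := P.is_maximal' hHp hPH
    rwa [← hHP]
  exact ((isNilpotent_of_finite_tfae (G := G)).out 3 0).mp sylow_normal
end

section
/- Let G be a finite group such that the commutator [x, y] belongs to LCM(G) for all x, y ∈ G. Then for all u, v ∈ G, the order o(uv) divides lcm(o(u), o(v)) · o([u, v]). -/
open scoped commutatorElement

private lemma orderOf_mul_comm' {G : Type*} [Group G] (a b : G) :
    orderOf (a * b) = orderOf (b * a) := by
  have : SemiconjBy a⁻¹ (a * b) (b * a) := by
    unfold SemiconjBy; group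
  exact this.orderOf_eq _

private lemma key {G : Type*} [Group G]
    (h : ∀ x y : G, ⁅x, y⁆ ∈ lcmFull G) (u v : G) {g : G}
    (hg : g ∈ Subgroup.normalClosure {⁅u, v⁆}) :
    orderOf g ∣ orderOf ⁅u, v⁆ ∧
      ∀ z : G, orderOf (g * z) ∣ Nat.lcm (orderOf ⁅u, v⁆) (orderOf z) := by
  set m := orderOf ⁅u, v⁆ with hm
  refine Subgroup.closure_induction (k := Group.conjugatesOfSet {⁅u, v⁆})
    (p := fun g _ => orderOf g ∣ m ∧ ∀ z : G, orderOf (g * z) ∣ Nat.lcm m (orderOf z))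
    ?_ ?_ ?_ ?_ hg
  · -- generators: conjugates of ⁅u, v⁆
    intro x hx
    rw [Group.mem_conjugatesOfSet_iff] at hx
    obtain ⟨a, ha, hconj⟩ := hx
    rw [Set.mem_singleton_iff] at ha
    subst ha
    obtain ⟨t, ht⟩ := isConj_iff.mp hconj
    have hx_comm : x = ⁅t * u * t⁻¹, t * v * t⁻¹⁆ := by
      rw [← ht]; simp only [commutatorElement_def]; group
    have horder : orderOf x = m := by
      rw [← ht]
      exact ((SemiconjBy.conj_mk t ⁅u, v⁆).orderOf_eq t).symm
    constructor
    · exact horder ▸ dvd_refl m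
    · intro z
      have := h (t * u * t⁻¹) (t * v * t⁻¹) z 1
      rw [zpow_one, ← hx_comm, horder] at this
      exact this
  · refine ⟨by simp, fun z => by simpa using Nat.dvd_lcm_right m (orderOf z)⟩
  · rintro a b _ _ ⟨ha1, ha2⟩ ⟨hb1, hb2⟩
    constructor
    · calc orderOf (a * b) ∣ Nat.lcm m (orderOf b) := ha2 b
        _ ∣ m := Nat.lcm_dvd (dvd_refl m) hb1
    · intro z
      calc orderOf (a * b * z) = orderOf (a * (b * z)) := by rw [mul_assoc]
        _ ∣ Nat.lcm m (orderOf (b * z)) := ha2 (b * z)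
        _ ∣ Nat.lcm m (orderOf z) :=
          Nat.lcm_dvd (Nat.dvd_lcm_left _ _)
            ((hb2 z).trans (Nat.lcm_dvd (Nat.dvd_lcm_left _ _) (Nat.dvd_lcm_right _ _)))
  · rintro a _ ⟨ha1, ha2⟩
    constructor
    · rwa [orderOf_inv]
    · intro z
      have h1 : orderOf (a⁻¹ * z) = orderOf (a * z⁻¹) := by
        rw [show a⁻¹ * z = (z⁻¹ * a)⁻¹ by group, orderOf_inv, orderOf_mul_comm']
      rw [h1, ← orderOf_inv z]
      exact ha2 z⁻¹

/-- If `[x, y] ∈ LCM(G)` for all `x, y` in a finite group `G`, then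
`o(uv) ∣ lcm(o(u), o(v)) * o([u, v])` for all `u, v ∈ G`. -/
theorem orderOf_mul_dvd_of_commutators_mem_lcmFull (G : Type*) [Group G] [Finite G]
    (h : ∀ x y : G, ⁅x, y⁆ ∈ lcmFull G) :
    ∀ u v : G, orderOf (u * v) ∣ Nat.lcm (orderOf u) (orderOf v) * orderOf ⁅u, v⁆ := by
  intro u v
  set L := Nat.lcm (orderOf u) (orderOf v) with hL
  set N := Subgroup.normalClosure {⁅u, v⁆} with hN
  -- Step 1 : (u*v)^L ∈ N
  have hmem : (u * v) ^ L ∈ N := by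
    rw [← QuotientGroup.eq_one_iff (G := G) (N := N)]
    rw [QuotientGroup.mk_pow, QuotientGroup.mk_mul]
    have hcomm : Commute ((u : G ⧸ N)) ((v : G ⧸ N)) := by
      rw [← commutatorElement_eq_one_iff_commute]
      have : ((⁅u, v⁆ : G) : G ⧸ N) = 1 := by
        rw [QuotientGroup.eq_one_iff]
        exact Subgroup.subset_normalClosure (Set.mem_singleton _)
      simpa [commutatorElement_def] using this
    rw [hcomm.mul_pow]
    have h1 : ((u : G ⧸ N)) ^ L = 1 := by
      apply orderOf_dvd_iff_pow_eq_one.mp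
      exact (orderOf_map_dvd (QuotientGroup.mk' N) u).trans (Nat.dvd_lcm_left _ _)
    have h2 : ((v : G ⧸ N)) ^ L = 1 := by
      apply orderOf_dvd_iff_pow_eq_one.mp
      exact (orderOf_map_dvd (QuotientGroup.mk' N) v).trans (Nat.dvd_lcm_right _ _)
    rw [h1, h2, mul_one]
  -- Step 2 : orderOf ((u*v)^L) ∣ orderOf ⁅u,v⁆
  have hdvd : orderOf ((u * v) ^ L) ∣ orderOf ⁅u, v⁆ := (key h u v hmem).1
  -- Step 3 : combine
  have hkey : orderOf (u * v) ∣ L * orderOf ((u * v) ^ L) := by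
    apply orderOf_dvd_of_pow_eq_one
    rw [pow_mul]
    exact pow_orderOf_eq_one _
  exact hkey.trans (Nat.mul_dvd_mul_left L hdvd)
end

section
/- Let G be a finite group and let P be a Sylow p-subgroup of G. If o(xy) divides lcm(o(x), o(y)) for every x ∈ P and every y ∈ G ∖ P, then P is normal in G. -/
/-- Let `P` be a Sylow `p`-subgroup of a finite group `G`. If `o(xy) ∣ lcm(o(x), o(y))`
for every `x ∈ P` and every `y ∈ G \ P`, then `P` is normal in `G`. -/
theorem sylow_normal_of_connected (G : Type*) [Group G] [Finite G]
    (p : ℕ) (hp : p.Prime) (P : Sylow p G)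
    (h : ∀ x ∈ (P : Subgroup G), ∀ y : G, y ∉ (P : Subgroup G) →
      orderOf (x * y) ∣ Nat.lcm (orderOf x) (orderOf y)) :
    (P : Subgroup G).Normal := by
  classical
  haveI : Fact p.Prime := ⟨hp⟩
  -- Q g : g is a p-element
  set Q : G → Prop := fun g => ∃ k : ℕ, orderOf g ∣ p ^ k with hQdef
  have hA : ∀ x ∈ (P : Subgroup G), Q x := by
    intro x hx
    obtain ⟨k, hk⟩ := P.isPGroup' ⟨x, hx⟩
    exact ⟨k, orderOf_dvd_of_pow_eq_one (by simpa using Subtype.ext_iff.mp hk)⟩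
  have hC : ∀ (g a : G), Q a → Q (g * a * g⁻¹) := by
    intro g a ha
    obtain ⟨k, hk⟩ := ha
    refine ⟨k, ?_⟩
    have : orderOf ((MulAut.conj g) a) = orderOf a :=
      orderOf_injective (MulAut.conj g).toMonoidHom (MulAut.conj g).injective a
    simpa [MulAut.conj_apply] using this.symm ▸ hk
  have hB : ∀ x ∈ (P : Subgroup G), ∀ s : G, Q s → Q (x * s) := by
    intro x hx s hs
    by_cases hsP : s ∈ (P : Subgroup G)
    · exact hA _ (mul_mem hx hsP)
    · obtain ⟨k1, hk1⟩ := hA x hx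
      obtain ⟨k2, hk2⟩ := hs
      refine ⟨k1 + k2, (h x hx s hsP).trans (Nat.lcm_dvd ?_ ?_)⟩
      · exact hk1.trans (pow_dvd_pow p (Nat.le_add_right _ _))
      · exact hk2.trans (pow_dvd_pow p (Nat.le_add_left _ _))
  have hD : ∀ a s : G, Q a → Q s → Q (a * s) := by
    intro a s ha hs
    obtain ⟨k, hk⟩ := ha
    have hpa : IsPGroup p (Subgroup.zpowers a) := by
      intro g
      refine ⟨k, ?_⟩
      have : orderOf (g : G) ∣ p ^ k := (orderOf_dvd_of_mem_zpowers g.2).trans hk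
      have h1 : (g : G) ^ p ^ k = 1 := orderOf_dvd_iff_pow_eq_one.mp this
      exact Subtype.ext (by simpa using h1)
    obtain ⟨R, hR⟩ := hpa.exists_le_sylow
    obtain ⟨g, hg⟩ := MulAction.exists_smul_eq G R P
    have haR : a ∈ (R : Subgroup G) := hR (Subgroup.mem_zpowers a)
    have haP : g * a * g⁻¹ ∈ (P : Subgroup G) := by
      have := Subgroup.smul_mem_pointwise_smul a (MulAut.conj g) (R : Subgroup G) haR
      rw [← Sylow.coe_subgroup_smul, hg] at this
      simpa [MulAut.conj_apply] using this
    have hsQ : Q (g * s * g⁻¹) := hC g s hs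
    have hmul : Q ((g * a * g⁻¹) * (g * s * g⁻¹)) := hB _ haP _ hsQ
    have := hC g⁻¹ _ hmul
    simpa [mul_assoc] using this
  -- K : the subgroup of p-elements
  set K : Subgroup G :=
    { carrier := {g | Q g}
      mul_mem' := fun {a} {b} ha hb => hD a b ha hb
      one_mem' := ⟨0, by simp⟩
      inv_mem' := fun {a} ha => by obtain ⟨k, hk⟩ := ha; exact ⟨k, by simpa [orderOf_inv] using hk⟩ } with hKdef
  have hPK : (P : Subgroup G) ≤ K := fun x hx => hA x hx
  have hKp : IsPGroup p K := by
    intro g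
    obtain ⟨k, hk⟩ := g.2
    exact ⟨k, Subtype.ext (by simpa using orderOf_dvd_iff_pow_eq_one.mp hk)⟩
  have hKP : K = (P : Subgroup G) := P.is_maximal' hKp hPK
  constructor
  intro z hz g
  have : g * z * g⁻¹ ∈ K := hC g z (hA z hz)
  rwa [hKP] at this
end

section
/- Let G be a finite group of order n. Then there exists a bijection f : G → ℤ/nℤ such that, for all x, y ∈ G, o(xy) divides lcm(o(x), o(y)) if and only if o(f(x) + f(y)) divides lcm(o(f(x)), o(f(y))), if and only if G is nilpotent and every Sylow subgroup of G belongs to CP2. -/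
/-- In `ZMod n` (indeed any additive commutative monoid), the order of a sum always
divides the lcm of the orders. -/
lemma zmod_lcm_always (n : ℕ) (a b : ZMod n) :
    addOrderOf (a + b) ∣ Nat.lcm (addOrderOf a) (addOrderOf b) := by
  rw [addOrderOf_dvd_iff_nsmul_eq_zero, smul_add,
    addOrderOf_dvd_iff_nsmul_eq_zero.mp (Nat.dvd_lcm_left _ _),
    addOrderOf_dvd_iff_nsmul_eq_zero.mp (Nat.dvd_lcm_right _ _), add_zero]

/-- The lcm-divisibility property implies nilpotency and CP2 for Sylow subgroups. -/
lemma forward_dir (G : Type*) [Group G] [Finite G]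
    (h : ∀ x y : G, orderOf (x * y) ∣ Nat.lcm (orderOf x) (orderOf y)) :
    Group.IsNilpotent G ∧
      ∀ (p : ℕ), p.Prime → ∀ P : Sylow p G, IsCP2 ↥(P : Subgroup G) := by
  have key : ∀ (p : ℕ), p.Prime → ∀ x y : G, (∃ a, orderOf x = p ^ a) →
      (∃ b, orderOf y = p ^ b) → ∃ c, orderOf (x * y) = p ^ c := by
    rintro p hp x y ⟨a, ha⟩ ⟨b, hb⟩
    have hd : orderOf (x * y) ∣ p ^ max a b := by
      refine (h x y).trans (Nat.lcm_dvd ?_ ?_)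
      · rw [ha]; exact pow_dvd_pow _ (le_max_left a b)
      · rw [hb]; exact pow_dvd_pow _ (le_max_right a b)
    obtain ⟨c, _, hc⟩ := (Nat.dvd_prime_pow hp).mp hd
    exact ⟨c, hc⟩
  constructor
  · -- nilpotent: every Sylow subgroup is normal
    refine ((isNilpotent_of_finite_tfae (G := G)).out 0 3).mpr ?_
    intro p hp P
    -- the set of p-elements is a subgroup
    let S : Subgroup G :=
      { carrier := {x : G | ∃ k, orderOf x = p ^ k}
        one_mem' := ⟨0, by simp⟩
        mul_mem' := fun hx hy => key p hp.out _ _ hx hy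
        inv_mem' := fun hx => by
          obtain ⟨k, hk⟩ := hx
          exact ⟨k, by rwa [orderOf_inv]⟩ }
    have hSpg : IsPGroup p S := by
      rw [IsPGroup.iff_orderOf]
      rintro ⟨g, k, hk⟩
      exact ⟨k, by rwa [← Subgroup.orderOf_coe]⟩
    have hPS : (P : Subgroup G) ≤ S := by
      intro x hx
      obtain ⟨k, hk⟩ := (IsPGroup.iff_orderOf.mp P.isPGroup') ⟨x, hx⟩
      exact ⟨k, by rwa [Subgroup.orderOf_mk] at hk⟩
    have hSP : S = (P : Subgroup G) := P.is_maximal' hSpg hPS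
    have hSnormal : S.Normal := by
      constructor
      rintro x ⟨k, hk⟩ g
      refine ⟨k, ?_⟩
      have := (MulAut.conj g : G ≃* G).orderOf_eq x
      simp only [MulAut.conj_apply] at this
      rwa [this]
    rwa [← hSP]
  · -- CP2 for Sylow subgroups
    intro p hp P x y
    haveI : Fact p.Prime := ⟨hp⟩
    obtain ⟨a, ha⟩ := (IsPGroup.iff_orderOf.mp P.isPGroup') x
    obtain ⟨b, hb⟩ := (IsPGroup.iff_orderOf.mp P.isPGroup') y
    have hxy := h (x : G) (y : G)
    rw [Subgroup.orderOf_coe, Subgroup.orderOf_coe, ha, hb] at hxy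
    have hd : orderOf ((x : G) * y) ∣ p ^ max a b := by
      refine hxy.trans (Nat.lcm_dvd ?_ ?_)
      · exact pow_dvd_pow _ (le_max_left a b)
      · exact pow_dvd_pow _ (le_max_right a b)
    have h1 : orderOf (x * y) ∣ p ^ max a b := by
      rwa [← Subgroup.orderOf_coe, Subgroup.coe_mul]
    have h2 : orderOf (x * y) ≤ p ^ max a b :=
      Nat.le_of_dvd (pow_pos hp.pos _) h1
    rcases le_total a b with hab | hab
    · rw [max_eq_right hab] at h2
      rw [ha, hb]
      exact h2.trans (le_max_right _ _)
    · rw [max_eq_left hab] at h2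
      rw [ha, hb]
      exact h2.trans (le_max_left _ _)

/-- Nilpotency plus CP2 Sylow subgroups implies the lcm-divisibility property. -/
lemma backward_dir (G : Type*) [Group G] [Finite G]
    (hnil : Group.IsNilpotent G)
    (hcp2 : ∀ (p : ℕ), p.Prime → ∀ P : Sylow p G, IsCP2 ↥(P : Subgroup G)) :
    ∀ x y : G, orderOf (x * y) ∣ Nat.lcm (orderOf x) (orderOf y) := by
  obtain ⟨e⟩ := ((isNilpotent_of_finite_tfae (G := G)).out 0 4).mp hnil
  intro x y
  set a := e.symm x with ha
  set b := e.symm y with hb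
  have hx : orderOf a = orderOf x := e.symm.orderOf_eq x
  have hy : orderOf b = orderOf y := e.symm.orderOf_eq y
  have hxy : x * y = e (a * b) := by rw [map_mul]; simp [ha, hb]
  rw [hxy, e.orderOf_eq]
  set L := Nat.lcm (orderOf x) (orderOf y) with hL
  rw [orderOf_dvd_iff_pow_eq_one]
  funext p
  funext P
  haveI : Fact (p : ℕ).Prime := ⟨Nat.prime_of_mem_primeFactors p.2⟩
  simp only [Pi.pow_apply, Pi.mul_apply, Pi.one_apply]
  set u := a p P with hu
  set v := b p P with hv
  -- orderOf u ∣ orderOf a ∣ L, similarly for v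
  have hua : orderOf u ∣ orderOf x := by
    rw [← hx, orderOf_dvd_iff_pow_eq_one, hu]
    have : a ^ orderOf a = 1 := pow_orderOf_eq_one a
    calc (a p P) ^ orderOf a = (a ^ orderOf a) p P := by simp
    _ = 1 := by rw [this]; rfl
  have hvb : orderOf v ∣ orderOf y := by
    rw [← hy, orderOf_dvd_iff_pow_eq_one, hv]
    have : b ^ orderOf b = 1 := pow_orderOf_eq_one b
    calc (b p P) ^ orderOf b = (b ^ orderOf b) p P := by simp
    _ = 1 := by rw [this]; rfl
  obtain ⟨i, hi⟩ := (IsPGroup.iff_orderOf.mp P.isPGroup') u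
  obtain ⟨j, hj⟩ := (IsPGroup.iff_orderOf.mp P.isPGroup') v
  obtain ⟨c, hc⟩ := (IsPGroup.iff_orderOf.mp P.isPGroup') (u * v)
  have hle : orderOf (u * v) ≤ max (orderOf u) (orderOf v) :=
    hcp2 p (Nat.prime_of_mem_primeFactors p.2) P u v
  rw [← orderOf_dvd_iff_pow_eq_one]
  have hp1 : (1 : ℕ) < (p : ℕ) := (Fact.out (p := (p : ℕ).Prime)).one_lt
  rcases le_total i j with hij | hij
  · have hmax : max (orderOf u) (orderOf v) = orderOf v := by
      rw [hi, hj, max_eq_right (Nat.pow_le_pow_right (le_of_lt hp1) hij)]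
    rw [hmax, hj] at hle
    rw [hc] at hle
    have : c ≤ j := (Nat.pow_le_pow_iff_right hp1).mp hle
    have : orderOf (u * v) ∣ orderOf v := by
      rw [hc, hj]; exact pow_dvd_pow _ this
    exact (this.trans hvb).trans (Nat.dvd_lcm_right _ _)
  · have hmax : max (orderOf u) (orderOf v) = orderOf u := by
      rw [hi, hj, max_eq_left (Nat.pow_le_pow_right (le_of_lt hp1) hij)]
    rw [hmax, hi] at hle
    rw [hc] at hle
    have : c ≤ i := (Nat.pow_le_pow_iff_right hp1).mp hle
    have : orderOf (u * v) ∣ orderOf u := by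
      rw [hc, hi]; exact pow_dvd_pow _ this
    exact (this.trans hua).trans (Nat.dvd_lcm_left _ _)

/-- For a finite group `G` of order `n`, the LCM-graph of `G` is isomorphic to the
LCM-graph of the cyclic group `ℤ/nℤ` if and only if `G` is nilpotent and every Sylow
subgroup of `G` belongs to `CP2`. -/
theorem lcmGraph_iso_cyclic_iff (G : Type*) [Group G] [Finite G] :
    (∃ f : G ≃ ZMod (Nat.card G), ∀ x y : G,
        (orderOf (x * y) ∣ Nat.lcm (orderOf x) (orderOf y) ↔
          addOrderOf (f x + f y) ∣ Nat.lcm (addOrderOf (f x)) (addOrderOf (f y)))) ↔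
      (Group.IsNilpotent G ∧
        ∀ (p : ℕ), p.Prime → ∀ P : Sylow p G, IsCP2 ↥(P : Subgroup G)) := by
  constructor
  · rintro ⟨f, hf⟩
    exact forward_dir G fun x y => (hf x y).mpr (zmod_lcm_always _ _ _)
  · rintro ⟨hnil, hcp2⟩
    haveI : NeZero (Nat.card G) := ⟨Nat.card_pos.ne'⟩
    haveI := Fintype.ofFinite G
    have hcard : Fintype.card G = Fintype.card (ZMod (Nat.card G)) := by
      rw [← Nat.card_eq_fintype_card, ← Nat.card_eq_fintype_card, Nat.card_zmod]
    exact ⟨Fintype.equivOfCardEq hcard, fun x y =>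
      iff_of_true (backward_dir G hnil hcp2 x y) (zmod_lcm_always _ _ _)⟩
end

section
/- Let G be a finite group of order n with h(G) conjugacy classes. Then |G|·(h(G) + 1) ≤ Deg(G) ≤ n·(n + 1). -/
/-- The degree of a vertex `g` in the LCM-graph of `G`: `g` is adjacent to `y` exactly
when `o(gy) ∣ lcm(o(g), o(y))`, and the loop at `g` contributes `2` to the degree. -/
noncomputable def degLCM {G : Type*} [Group G] (g : G) : ℕ :=
  1 + Nat.card {y : G // orderOf (g * y) ∣ Nat.lcm (orderOf g) (orderOf y)}

/-- `Deg G`: the sum of the degrees of all vertices of the LCM-graph of `G`. -/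
noncomputable def DegLCM (G : Type*) [Group G] : ℕ := ∑ᶠ g : G, degLCM g

/-- For a finite group `G` of order `n` with `h(G)` conjugacy classes,
`|G| * (h(G) + 1) ≤ Deg(G) ≤ n * (n + 1)`. -/
theorem DegLCM_bounds (G : Type*) [Group G] [Finite G] :
    Nat.card G * (Nat.card (ConjClasses G) + 1) ≤ DegLCM G ∧
      DegLCM G ≤ Nat.card G * (Nat.card G + 1) := by
  classical
  haveI : Fintype G := Fintype.ofFinite G
  have hDeg : DegLCM G = ∑ g : G, degLCM g := finsum_eq_sum_of_fintype _
  constructor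
  · -- lower bound
    have hcomm : ∀ g : G,
        Nat.card {y : G // Commute g y} ≤
        Nat.card {y : G // orderOf (g * y) ∣ Nat.lcm (orderOf g) (orderOf y)} := fun g =>
      Nat.card_le_card_of_injective
        (fun y => ⟨y.1, y.2.orderOf_mul_dvd_lcm⟩)
        (fun a b h => Subtype.ext (Subtype.mk_eq_mk.mp h))
    have hsum : ∑ g : G, Nat.card {y : G // Commute g y}
        = Nat.card (ConjClasses G) * Nat.card G := by
      rw [← card_comm_eq_card_conjClasses_mul_card,
        Nat.card_congr (Equiv.subtypeProdEquivSigmaSubtype (fun g y : G => Commute g y))]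
      simp [Nat.card_eq_fintype_card]
    calc Nat.card G * (Nat.card (ConjClasses G) + 1)
        = Nat.card (ConjClasses G) * Nat.card G + Nat.card G := by ring
      _ = ∑ g : G, Nat.card {y : G // Commute g y} + ∑ g : G, 1 := by
          rw [hsum]
          simp [Nat.card_eq_fintype_card]
      _ = ∑ g : G, (1 + Nat.card {y : G // Commute g y}) := by
          rw [← Finset.sum_add_distrib]; exact Finset.sum_congr rfl fun g _ => by ring
      _ ≤ ∑ g : G, degLCM g :=
          Finset.sum_le_sum fun g _ => Nat.add_le_add_left (hcomm g) 1
      _ = DegLCM G := hDeg.symm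
  · -- upper bound
    have hle : ∀ g : G, degLCM g ≤ 1 + Nat.card G := fun g =>
      Nat.add_le_add_left (Nat.card_le_card_of_injective Subtype.val Subtype.val_injective) 1
    calc DegLCM G = ∑ g : G, degLCM g := hDeg
      _ ≤ ∑ _g : G, (1 + Nat.card G) := Finset.sum_le_sum fun g _ => hle g
      _ = Nat.card G * (Nat.card G + 1) := by
          simp [Nat.card_eq_fintype_card, Finset.sum_const, mul_comm, Nat.add_comm]
end

section
/- Let G and H be finite groups. Then Deg(H × G) ≥ Deg(H)·Deg(G) − |G|·Deg(H) − |H|·Deg(G) + 2·|H|·|G|, i.e. Deg(H × G) ≥ (Deg(G) − |G|)·(Deg(H) − |H|) + |H|·|G|. -/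
/-- auxiliary: the non-loop degree -/
noncomputable def dLCM {G : Type*} [Group G] (g : G) : ℕ :=
  Nat.card {y : G // orderOf (g * y) ∣ Nat.lcm (orderOf g) (orderOf y)}

lemma DegLCM_eq (G : Type*) [Group G] [Fintype G] :
    DegLCM G = Fintype.card G + ∑ g : G, dLCM g := by
  rw [DegLCM, finsum_eq_sum_of_fintype]
  simp [degLCM, dLCM, Finset.sum_add_distrib, Finset.card_univ]

lemma dLCM_prod_ge {G H : Type*} [Group G] [Finite G] [Group H] [Finite H]
    (h : H) (g : G) : dLCM h * dLCM g ≤ dLCM (h, g) := by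
  rw [dLCM, dLCM, dLCM, ← Nat.card_prod]
  apply Nat.card_le_card_of_injective
    (f := fun p => ⟨(p.1.1, p.2.1), by
      obtain ⟨⟨y, hy⟩, ⟨z, hz⟩⟩ := p
      simp only [Prod.mk_mul_mk, Prod.orderOf_mk]
      apply Nat.lcm_dvd
      · exact hy.trans (Nat.lcm_dvd ((Nat.dvd_lcm_left _ _).trans (Nat.dvd_lcm_left _ _))
          ((Nat.dvd_lcm_left _ _).trans (Nat.dvd_lcm_right _ _)))
      · exact hz.trans (Nat.lcm_dvd ((Nat.dvd_lcm_right _ _).trans (Nat.dvd_lcm_left _ _))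
          ((Nat.dvd_lcm_right _ _).trans (Nat.dvd_lcm_right _ _)))⟩)
  rintro ⟨⟨y, _⟩, ⟨z, _⟩⟩ ⟨⟨y', _⟩, ⟨z', _⟩⟩ hpq
  simp only [Subtype.mk.injEq, Prod.mk.injEq] at hpq
  simp [hpq.1, hpq.2]

/-- For finite groups `G` and `H`,
`Deg(H × G) ≥ Deg(H)·Deg(G) − |G|·Deg(H) − |H|·Deg(G) + 2·|H|·|G|`, i.e.
`Deg(H × G) ≥ (Deg(G) − |G|)·(Deg(H) − |H|) + |H|·|G|` (as integers). -/
theorem DegLCM_prod_ge (G H : Type*) [Group G] [Finite G] [Group H] [Finite H] :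
    ((DegLCM G : ℤ) - Nat.card G) * ((DegLCM H : ℤ) - Nat.card H)
        + (Nat.card H : ℤ) * Nat.card G ≤ (DegLCM (H × G) : ℤ) := by
  have : Fintype G := Fintype.ofFinite G
  have : Fintype H := Fintype.ofFinite H
  rw [DegLCM_eq G, DegLCM_eq H, DegLCM_eq (H × G)]
  simp only [Nat.card_eq_fintype_card]
  push_cast
  have key : (∑ g : G, (dLCM g : ℤ)) * (∑ h : H, (dLCM h : ℤ))
      ≤ ∑ p : H × G, (dLCM p : ℤ) := by
    rw [mul_comm, Finset.sum_mul_sum, Fintype.sum_prod_type]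
    apply Finset.sum_le_sum; intro h _
    apply Finset.sum_le_sum; intro g _
    exact_mod_cast dLCM_prod_ge h g
  have hc : (Fintype.card (H × G) : ℤ) = Fintype.card H * Fintype.card G := by
    simp [Fintype.card_prod]
  linarith
end
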